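/- arXiv:1710.04757 — 6 statements merged into one kernel-verified Lean document; each statement's English description precedes it below -/
import Mathlib

section
/- Let K be an admissible complete multipartite graph with at least 2 parts, n vertices and m edges, and set t = m/(n−1). Then either K is a complete graph, or K is not regular and its maximum degree equals exactly 2t. -/
open SimpleGraph

theorem admissible_completeMultipartite_maxDegree
    {ι : Type*} [Fintype ι] [DecidableEq ι] (V : ι → Type*)
    [∀ i, Fintype (V i)] [∀ i, DecidableEq (V i)] [∀ i, Nonempty (V i)]
    (hr : 2 ≤ Fintype.card ι)
    (n m t : ℕ) (hn : n = Fintype.card (Σ i, V i))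
    (hm : m = (completeMultipartiteGraph V).edgeFinset.card)
    (hdvd : (n - 1) ∣ m)
    (hmax : (completeMultipartiteGraph V).maxDegree ≤ 2 * m / (n - 1))
    (ht : t = m / (n - 1)) :
    completeMultipartiteGraph V = ⊤ ∨
      ((¬ ∃ d, (completeMultipartiteGraph V).IsRegularOfDegree d) ∧
        (completeMultipartiteGraph V).maxDegree = 2 * t) := by
  set G := completeMultipartiteGraph V with hG
  have hn2 : 2 ≤ n := by
    subst hn
    rw [Fintype.card_sigma]
    calc 2 ≤ Fintype.card ι := hr
    _ = ∑ _i : ι, 1 := by simp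
    _ ≤ ∑ i, Fintype.card (V i) := Finset.sum_le_sum (fun i _ => Fintype.card_pos)
  have hn1 : 0 < n - 1 := by omega
  haveI hne : Nonempty (Σ i, V i) := Fintype.card_pos_iff.mp (by omega)
  obtain ⟨k, rfl⟩ : ∃ k, n = k + 1 := ⟨n - 1, by omega⟩
  simp only [Nat.add_sub_cancel] at *
  obtain ⟨c, hc⟩ := hdvd
  have htc : t = c := by rw [ht, hc, Nat.mul_div_cancel_left _ hn1]
  have hmt : m = k * t := by rw [htc, hc]
  have h2t : 2 * m / k = 2 * t := by
    rw [hmt, ← mul_assoc, mul_comm 2 k, mul_assoc, Nat.mul_div_cancel_left _ hn1]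
  rw [h2t] at hmax
  have hsum : ∑ v, G.degree v = 2 * m := by rw [hm]; exact G.sum_degrees_eq_twice_card_edges
  have hcardv : Fintype.card (Σ i, V i) = k + 1 := hn.symm
  have hdeg1 : ∀ v : Σ i, V i, 1 ≤ G.degree v := by
    rintro ⟨i, x⟩
    obtain ⟨j, hj⟩ := Fintype.exists_ne_of_one_lt_card (by omega) i
    obtain ⟨y⟩ := ‹∀ i, Nonempty (V i)› j
    rw [← SimpleGraph.card_neighborFinset_eq_degree]
    refine Finset.card_pos.2 ⟨⟨j, y⟩, ?_⟩
    rw [SimpleGraph.mem_neighborFinset]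
    exact Ne.symm hj
  have hdegn : ∀ v : Σ i, V i, G.degree v ≤ k := by
    intro v
    have := G.degree_lt_card_verts v
    omega
  rcases Nat.lt_or_ge G.maxDegree (2 * t) with hlt | hge
  · -- complete case
    left
    have hsle : 2 * m ≤ (k + 1) * G.maxDegree := by
      calc 2 * m = ∑ v, G.degree v := hsum.symm
      _ ≤ ∑ _v : Σ i, V i, G.maxDegree := Finset.sum_le_sum (fun v _ => G.degree_le_maxDegree v)
      _ = (k + 1) * G.maxDegree := by rw [Finset.sum_const, Finset.card_univ, hcardv, smul_eq_mul]
    have h2m : 2 * m = 2 * t * k := by rw [hmt]; ring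
    have hΔn : G.maxDegree ≤ k := by
      obtain ⟨v, hv⟩ := G.exists_maximal_degree_vertex
      rw [hv]; exact hdegn v
    have hn2t : k + 1 ≤ 2 * t := by nlinarith
    have key : 2 * m = (k + 1) * k := by nlinarith
    have hdeg : ∀ v : Σ i, V i, G.degree v = k := by
      by_contra hcon
      push_neg at hcon
      obtain ⟨v, hv⟩ := hcon
      have hlt' : ∑ w, G.degree w < ∑ _w : Σ i, V i, k :=
        Finset.sum_lt_sum (fun w _ => hdegn w)
          ⟨v, Finset.mem_univ v, lt_of_le_of_ne (hdegn v) hv⟩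
      rw [Finset.sum_const, Finset.card_univ, hcardv, smul_eq_mul, hsum, key] at hlt'
      omega
    ext v w
    simp only [SimpleGraph.top_adj]
    constructor
    · exact G.ne_of_adj
    · intro hvw
      have hsub : G.neighborFinset v ⊆ Finset.univ.erase v := by
        intro u hu
        rw [SimpleGraph.mem_neighborFinset] at hu
        exact Finset.mem_erase.2 ⟨(G.ne_of_adj hu).symm, Finset.mem_univ u⟩
      have hcard : (Finset.univ.erase v).card ≤ (G.neighborFinset v).card := by
        rw [Finset.card_erase_of_mem (Finset.mem_univ v), Finset.card_univ, hcardv,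
          G.card_neighborFinset_eq_degree, hdeg v]
        omega
      have heq := Finset.eq_of_subset_of_card_le hsub hcard
      have : w ∈ G.neighborFinset v := by
        rw [heq]; exact Finset.mem_erase.2 ⟨(Ne.symm hvw), Finset.mem_univ w⟩
      rwa [SimpleGraph.mem_neighborFinset] at this
  · right
    have hΔ : G.maxDegree = 2 * t := le_antisymm hmax hge
    refine ⟨?_, hΔ⟩
    rintro ⟨d, hd⟩
    have hsd : ∑ v, G.degree v = (k + 1) * d := by
      rw [Finset.sum_congr rfl (fun v _ => hd v), Finset.sum_const, Finset.card_univ, hcardv,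
        smul_eq_mul]
    obtain ⟨v, hv⟩ := G.exists_maximal_degree_vertex
    have hdv : d = G.maxDegree := by rw [hv, hd v]
    have hd1 : 1 ≤ d := by rw [hdv, hv]; exact hdeg1 v
    have : (k + 1) * d = k * (2 * t) := by
      rw [← hsd, hsum, hmt]; ring
    rw [← hΔ, ← hdv] at this
    nlinarith
end

section
/- Let K be an admissible complete multipartite graph with parts of cardinalities a_1 ≤ a_2 ≤ ⋯ ≤ a_r, where r ≥ 2. If a_1 < a_2, then a_i = a_1 + 1 for all i = 2, …, r. If a_1 = a_2, then a_1 + a_2 + ⋯ + a_r ≤ r(a_1 + 1) − 2. -/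
/-!
A vertex in a part of size `aᵢ` has degree `n - aᵢ`, so the maximum degree is `n - a₁` and
`2m = ∑ aᵢ (n - aᵢ) = n² - ∑ aᵢ²`. Admissibility gives `(n - a₁)(n - 1) ≤ n² - ∑ aᵢ²`, which
rearranges to `∑ (aᵢ - a₁ - 1) aᵢ ≤ -a₁`; the first part contributes exactly `-a₁`.
If `a₁ < a₂`, every other summand is nonnegative, hence zero, so `aᵢ = a₁ + 1`.
If `a₁ = a₂`, then with `dᵢ = aᵢ - a₁ - 1` the bound reads `∑ dᵢ² + (a₁ + 1) ∑ dᵢ ≤ -a₁`,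
and `d₁ = d₂ = -1` gives `∑ dᵢ² ≥ 2`, forcing `∑ dᵢ ≤ -2`.
-/

open SimpleGraph Finset

theorem Sigma.card_filter_fst_eq {ι : Type*} [Fintype ι] [DecidableEq ι] {V : ι → Type*}
    [∀ i, Fintype (V i)] (i : ι) : #{v : Σ j, V j | v.1 = i} = Fintype.card (V i) := by
  rw [card_filter, ← univ_sigma_univ, sum_sigma]
  simp [apply_ite, sum_ite_eq']

namespace SimpleGraph

variable {ι : Type*} [Fintype ι] [DecidableEq ι] {V : ι → Type*} [∀ i, Fintype (V i)]

theorem completeMultipartiteGraph_degree (i : ι) (x : V i) :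
    (completeMultipartiteGraph V).degree ⟨i, x⟩ = Fintype.card (Σ i, V i) - Fintype.card (V i) := by
  have hnbr : (completeMultipartiteGraph V).neighborFinset ⟨i, x⟩ =
      ({w | ¬w.1 = i} : Finset (Σ i, V i)) := by
    ext w
    simp [ne_comm]
  rw [← card_neighborFinset_eq_degree, hnbr, ← Sigma.card_filter_fst_eq i, ← card_univ,
    ← card_filter_add_card_filter_not (s := univ) (fun w : Σ i, V i => w.1 = i),
    Nat.add_sub_cancel_left]

theorem completeMultipartiteGraph_two_mul_card_edgeFinset_add_sum_sq :
    2 * #(completeMultipartiteGraph V).edgeFinset + ∑ i, Fintype.card (V i) ^ 2 =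
      Fintype.card (Σ i, V i) ^ 2 := by
  set n := Fintype.card (Σ i, V i)
  have hdeg : ∑ v, (completeMultipartiteGraph V).degree v =
      ∑ i, Fintype.card (V i) * (n - Fintype.card (V i)) := by
    rw [Fintype.sum_sigma]
    simp [completeMultipartiteGraph_degree, n]
  have hle (i : ι) : Fintype.card (V i) ≤ n := by
    rw [← Sigma.card_filter_fst_eq]
    exact card_le_univ _
  calc 2 * #(completeMultipartiteGraph V).edgeFinset + ∑ i, Fintype.card (V i) ^ 2
      = ∑ i, (Fintype.card (V i) * (n - Fintype.card (V i)) + Fintype.card (V i) ^ 2) := by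
        rw [← sum_degrees_eq_twice_card_edges, hdeg, sum_add_distrib]
    _ = ∑ i, Fintype.card (V i) * n :=
        sum_congr rfl fun i _ => by rw [sq, ← mul_add, Nat.sub_add_cancel (hle i)]
    _ = n ^ 2 := by rw [← sum_mul, ← Fintype.card_sigma, sq]

end SimpleGraph

section PartSizes

variable {ι : Type*} [Fintype ι]

theorem sum_sub_sub_one_mul_le_neg (a : ι → ℤ) (c : ℤ)
    (h : (∑ i, a i - c) * (∑ i, a i - 1) + ∑ i, a i ^ 2 ≤ (∑ i, a i) ^ 2) :
    ∑ i, (a i - c - 1) * a i ≤ -c := by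
  have hexp : ∑ i, (a i - c - 1) * a i = ∑ i, a i ^ 2 - (c + 1) * ∑ i, a i := by
    rw [mul_sum, ← sum_sub_distrib]
    exact sum_congr rfl fun i _ => by ring
  rw [hexp]
  nlinarith

theorem eq_add_one_of_sum_sub_sub_one_mul_le_neg [DecidableEq ι] {a : ι → ℤ} {c : ℤ}
    (hc : 0 ≤ c) {i : ι} (hi : a i = c) (hlt : ∀ j ≠ i, c < a j)
    (h : ∑ k, (a k - c - 1) * a k ≤ -c) :
    ∀ j ≠ i, a j = c + 1 := by
  have hnonneg : ∀ j ∈ univ.erase i, 0 ≤ (a j - c - 1) * a j := fun j hj => by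
    have := hlt j (ne_of_mem_erase hj)
    nlinarith
  rw [← add_sum_erase _ _ (mem_univ i), hi] at h
  have hzero := (sum_eq_zero_iff_of_nonneg hnonneg).1 (by linarith [sum_nonneg hnonneg])
  intro j hj
  have := hlt j hj
  rcases mul_eq_zero.1 (hzero j (mem_erase.2 ⟨hj, mem_univ j⟩)) with h' | h' <;> omega

theorem sum_le_of_sum_sub_sub_one_mul_le_neg {a : ι → ℤ} {c : ℤ} (hc : 0 ≤ c) {i j : ι}
    (hij : i ≠ j) (hi : a i = c) (hj : a j = c) (h : ∑ k, (a k - c - 1) * a k ≤ -c) :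
    ∑ k, a k + 2 ≤ Fintype.card ι * (c + 1) := by
  have hsq : 2 ≤ ∑ k, (a k - c - 1) ^ 2 := by
    classical
    have := sum_le_sum_of_subset_of_nonneg (subset_univ {i, j})
      fun k _ _ => sq_nonneg (a k - c - 1)
    rw [sum_pair hij, hi, hj] at this
    linarith
  have hexp : ∑ k, (a k - c - 1) * a k =
      ∑ k, (a k - c - 1) ^ 2 + (c + 1) * ∑ k, (a k - c - 1) := by
    rw [mul_sum, ← sum_add_distrib]
    exact sum_congr rfl fun k _ => by ring
  have hshift : ∑ k, (a k - c - 1) = ∑ k, a k - Fintype.card ι * (c + 1) := by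
    simp only [sum_sub_distrib, sum_const, card_univ, Int.nsmul_eq_mul, mul_one]
    ring
  nlinarith

end PartSizes

theorem admissible_completeMultipartite_part_sizes
    (r : ℕ) (hr : 2 ≤ r) (V : Fin r → Type*)
    [∀ i, Fintype (V i)] [∀ i, Nonempty (V i)]
    (hmono : Monotone fun i => Fintype.card (V i))
    (n m : ℕ) (hn : n = Fintype.card (Σ i, V i))
    (hm : m = (completeMultipartiteGraph V).edgeFinset.card)
    (hmax : (completeMultipartiteGraph V).maxDegree ≤ 2 * m / (n - 1)) :
    (Fintype.card (V ⟨0, by omega⟩) < Fintype.card (V ⟨1, by omega⟩) →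
      ∀ i : Fin r, i ≠ ⟨0, by omega⟩ →
        Fintype.card (V i) = Fintype.card (V ⟨0, by omega⟩) + 1) ∧
    (Fintype.card (V ⟨0, by omega⟩) = Fintype.card (V ⟨1, by omega⟩) →
      ∑ i, Fintype.card (V i) ≤ r * (Fintype.card (V ⟨0, by omega⟩) + 1) - 2) := by
  set i₀ : Fin r := ⟨0, by omega⟩
  set i₁ : Fin r := ⟨1, by omega⟩
  set a : Fin r → ℕ := fun i => Fintype.card (V i)
  have hsum : n = ∑ i, a i := hn.trans Fintype.card_sigma
  have ha₀ : 1 ≤ a i₀ := Fintype.card_pos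
  have ha₀n : a i₀ ≤ n := hsum ▸ single_le_sum (fun i _ => Nat.zero_le (a i)) (mem_univ i₀)
  have hdeg : n - a i₀ ≤ (completeMultipartiteGraph V).maxDegree := by
    rw [hn, ← completeMultipartiteGraph_degree i₀ (Classical.arbitrary _)]
    exact degree_le_maxDegree _ _
  have hadm : (n - a i₀) * (n - 1) ≤ 2 * m :=
    (Nat.mul_le_mul_right _ (hdeg.trans hmax)).trans (Nat.div_mul_le_self _ _)
  have hedges : 2 * m + ∑ i, a i ^ 2 = n ^ 2 := by
    rw [hm, hn]
    exact completeMultipartiteGraph_two_mul_card_edgeFinset_add_sum_sq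
  have hkey : ∑ i, ((a i : ℤ) - a i₀ - 1) * a i ≤ -a i₀ := by
    have hsumZ : ∑ i, (a i : ℤ) = n := by exact_mod_cast hsum.symm
    apply sum_sub_sub_one_mul_le_neg
    zify [ha₀n, ha₀.trans ha₀n] at hadm hedges
    rw [hsumZ]
    linarith
  constructor
  · intro hlt i hi
    have hlt' (j : Fin r) (hj : j ≠ i₀) : (a i₀ : ℤ) < a j := by
      have hj₁ : i₁ ≤ j := Fin.le_def.2 (Nat.pos_of_ne_zero fun h => hj (Fin.ext h))
      exact_mod_cast hlt.trans_le (hmono hj₁)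
    exact_mod_cast eq_add_one_of_sum_sub_sub_one_mul_le_neg (by positivity) rfl hlt' hkey i hi
  · intro heq
    have hle := sum_le_of_sum_sub_sub_one_mul_le_neg (by positivity)
      (show i₀ ≠ i₁ by simp [i₀, i₁, Fin.ext_iff]) rfl (by exact_mod_cast heq.symm) hkey
    rw [Fintype.card_fin] at hle
    exact Nat.le_sub_of_add_le (by exact_mod_cast hle)
end

section
/- Let K be an admissible complete multipartite graph with r ≥ 2 parts, n vertices and m edges, let t = m/(n−1), and let B be the degree partition of the vertices of K (vertices in the same class iff their parts have equal cardinality). Then there exists a class B_y ∈ B such that either (i) |B_y|·|B_j| ≥ 2t for every class B_j ∈ B with B_j ≠ B_y, or (ii) there is a class B_x ∈ B that consists of exactly one part of K, with |B_y|·|B_j| ≥ 2t for every class B_j ∈ B with B_j ∉ {B_x, B_y}. (Equivalently, the quotient multigraph K^B contains a star of edge multiplicity 2t that spans all classes, or all classes except one that is a single part.) -/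
open SimpleGraph Finset

private theorem star_core_lemma (C : Finset ℕ) (S r : ℕ → ℕ) (n d t c₁ y : ℕ)
    (hc₁ : c₁ ∈ C) (hc₁min : ∀ c ∈ C, c₁ ≤ c)
    (hM : ∀ c ∈ C, S c ≤ S y)
    (hS : ∀ c ∈ C, S c = c * r c)
    (hr : ∀ c ∈ C, 1 ≤ r c)
    (hn : n = ∑ c ∈ C, S c)
    (hd1 : 1 ≤ d) (hdc : d ≤ c₁)
    (hkey : d * n + n = (∑ c ∈ C, c * S c) + d)
    (h2t : 2 * t + d = n) :
    (∀ j ∈ C, j ≠ y → 2 * t ≤ S y * S j) ∨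
      (∃ x ∈ C, x ≠ y ∧ r x = 1 ∧
        ∀ j ∈ C, j ≠ y → j ≠ x → 2 * t ≤ S y * S j) := by
  have hc₁pos : 1 ≤ c₁ := hd1.trans hdc
  have hSpos : ∀ c ∈ C, c ≤ S c := by
    intro c hc
    rw [hS c hc]
    exact Nat.le_mul_of_pos_right c (hr c hc)
  have hn1 : 0 < n := by
    have h1 : S c₁ ≤ ∑ c ∈ C, S c := Finset.single_le_sum (fun c _ => Nat.zero_le _) hc₁
    have h2 := hSpos c₁ hc₁
    omega
  have step1 : (∑ c ∈ C, c * S c) + c₁ ≤ ∑ c ∈ C, (c₁ + 1) * S c := by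
    have hsplitmul : (d + (c₁ - d)) * n = d * n + (c₁ - d) * n := Nat.add_mul _ _ _
    have he0 : d + (c₁ - d) = c₁ := by omega
    rw [he0] at hsplitmul
    have hgap : c₁ - d ≤ (c₁ - d) * n := Nat.le_mul_of_pos_right _ hn1
    have h2 : ∑ c ∈ C, (c₁ + 1) * S c = c₁ * n + n := by
      rw [hn, ← Finset.mul_sum]; ring
    omega
  set E : Finset ℕ := (C.erase c₁).erase (c₁ + 1) with hE
  have hEmem : ∀ c ∈ E, c₁ + 2 ≤ c := by
    intro c hc
    have h1 := Finset.ne_of_mem_erase hc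
    have h2 := Finset.mem_erase.mp (Finset.mem_of_mem_erase hc)
    have := hc₁min c (Finset.mem_of_mem_erase (Finset.mem_of_mem_erase hc))
    omega
  have step2 : (∑ c ∈ E, S c) + c₁ ≤ S c₁ ∧ n + c₁ ≤ 2 * S c₁ + S y := by
    have hsplit1 : ∀ f : ℕ → ℕ, f c₁ + ∑ c ∈ C.erase c₁, f c = ∑ c ∈ C, f c :=
      fun f => Finset.add_sum_erase C f hc₁
    have hEbound : (∑ c ∈ E, (c₁ + 1) * S c) + ∑ c ∈ E, S c ≤ ∑ c ∈ E, c * S c := by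
      rw [← Finset.sum_add_distrib]
      apply Finset.sum_le_sum
      intro c hc
      have h1 := hEmem c hc
      calc (c₁ + 1) * S c + S c = (c₁ + 2) * S c := by ring
        _ ≤ c * S c := Nat.mul_le_mul h1 (Nat.le_refl _)
    by_cases hc2 : c₁ + 1 ∈ C
    · have hc2' : c₁ + 1 ∈ C.erase c₁ := Finset.mem_erase.mpr ⟨by omega, hc2⟩
      have hsplit2 : ∀ f : ℕ → ℕ,
          f (c₁+1) + ∑ c ∈ E, f c = ∑ c ∈ C.erase c₁, f c :=
        fun f => Finset.add_sum_erase _ f hc2'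
      have e1 := hsplit1 (fun c => c * S c)
      have e2 := hsplit1 (fun c => (c₁ + 1) * S c)
      have e3 := hsplit2 (fun c => c * S c)
      have e4 := hsplit2 (fun c => (c₁ + 1) * S c)
      have expand : (c₁ + 1) * S c₁ = c₁ * S c₁ + S c₁ := by ring
      have key : (∑ c ∈ E, S c) + c₁ ≤ S c₁ := by omega
      refine ⟨key, ?_⟩
      have hn' := hsplit1 S
      have e5 := hsplit2 S
      have hSy := hM (c₁ + 1) hc2
      omega
    · have hEeq : E = C.erase c₁ := by
        rw [hE]; exact Finset.erase_eq_of_notMem (fun h => hc2 (Finset.mem_of_mem_erase h))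
      have e1 := hsplit1 (fun c => c * S c)
      have e2 := hsplit1 (fun c => (c₁ + 1) * S c)
      rw [← hEeq] at e1 e2
      have expand : (c₁ + 1) * S c₁ = c₁ * S c₁ + S c₁ := by ring
      have key : (∑ c ∈ E, S c) + c₁ ≤ S c₁ := by omega
      refine ⟨key, ?_⟩
      have hn' := hsplit1 S
      rw [← hEeq] at hn'
      have hSy := (hSpos c₁ hc₁).trans (hM c₁ hc₁)
      omega
  obtain ⟨-, step3⟩ := step2
  have hSy1 : 1 ≤ S y := le_trans hc₁pos (le_trans (hSpos c₁ hc₁) (hM c₁ hc₁))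
  have badlem : ∀ j ∈ C, j ≠ y → S y * S j < 2 * t →
      ((j = 1 ∧ S j = 1) ∨ (j = 2 ∧ S j = 2)) ∧ r j = 1 := by
    intro j hj hjy hbad
    have hMc₁ : S c₁ ≤ S y := hM c₁ hc₁
    have hSj2 : S j ≤ 2 := by
      by_contra h
      push_neg at h
      have h3 : 3 * S y ≤ S y * S j := by
        calc 3 * S y = S y * 3 := by ring
          _ ≤ S y * S j := Nat.mul_le_mul (Nat.le_refl _) h
      omega
    have hrj := hr j hj
    have hSj := hS j hj
    have hjS : j ≤ S j := hSpos j hj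
    have hjpos : 1 ≤ j := le_trans hc₁pos (hc₁min j hj)
    have h12 : S j = 1 ∨ S j = 2 := by omega
    rcases h12 with h1 | h2
    · have hj1 : j = 1 := by omega
      subst hj1
      rw [one_mul] at hSj
      exact ⟨Or.inl ⟨rfl, h1⟩, by omega⟩
    · have : j = 1 ∨ j = 2 := by omega
      rcases this with hj1 | hj2
      · exfalso
        subst hj1
        have hc₁1 : c₁ = 1 := le_antisymm (hc₁min 1 hj) hc₁pos
        have hSc₁ : S c₁ = 2 := by rw [hc₁1]; exact h2
        rw [h2] at hbad
        omega
      · subst hj2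
        rw [h2] at hSj
        exact ⟨Or.inr ⟨rfl, h2⟩, by omega⟩
  by_cases hall : ∀ j ∈ C, j ≠ y → 2 * t ≤ S y * S j
  · left; exact hall
  · right
    push_neg at hall
    obtain ⟨x, hx, hxy, hxbad⟩ := hall
    obtain ⟨hx12, hrx⟩ := badlem x hx hxy hxbad
    refine ⟨x, hx, hxy, hrx, ?_⟩
    intro j hj hjy hjx
    by_contra hbad
    push_neg at hbad
    obtain ⟨hj12, hrj⟩ := badlem j hj hjy hbad
    exfalso
    have hkey2 : (1 : ℕ) ∈ C ∧ S 1 = 1 ∧ ∃ j₂ ∈ C, S j₂ = 2 ∧ S y * S j₂ < 2 * t := by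
      rcases hx12 with ⟨hx1, hSx⟩ | ⟨hx2, hSx⟩ <;> rcases hj12 with ⟨hj1, hSj⟩ | ⟨hj2, hSj⟩
      · exact absurd (hx1.trans hj1.symm) hjx.symm
      · exact ⟨hx1 ▸ hx, hx1 ▸ hSx, j, hj, hSj, hbad⟩
      · exact ⟨hj1 ▸ hj, hj1 ▸ hSj, x, hx, hSx, hxbad⟩
      · exact absurd (hx2.trans hj2.symm) hjx.symm
    obtain ⟨h1C, hS1, j₂, hj₂, hSj₂, hbad₂⟩ := hkey2
    have hc₁1 : c₁ = 1 := le_antisymm (hc₁min 1 h1C) hc₁pos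
    have hSc₁ : S c₁ = 1 := by rw [hc₁1]; exact hS1
    rw [hSj₂] at hbad₂
    omega

private theorem star_deg_plus {ι : Type*} [Fintype ι] [DecidableEq ι] (V : ι → Type*)
    [∀ i, Fintype (V i)] [∀ i, DecidableEq (V i)]
    (v : Σ i, V i) :
    (completeMultipartiteGraph V).degree v + Fintype.card (V v.1) = Fintype.card (Σ i, V i) := by
  classical
  have hfilter : (Finset.univ.filter (fun w : Σ i, V i => w.1 = v.1))
      = Finset.univ.map ⟨Sigma.mk v.1, sigma_mk_injective⟩ := by
    ext ⟨j, u⟩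
    simp only [Finset.mem_filter, Finset.mem_univ, true_and, Finset.mem_map,
      Function.Embedding.coeFn_mk]
    constructor
    · rintro rfl
      exact ⟨u, rfl⟩
    · rintro ⟨a, h⟩
      exact (congrArg Sigma.fst h).symm
  have hdeg : (completeMultipartiteGraph V).degree v
      = (Finset.univ.filter (fun w : Σ i, V i => ¬ w.1 = v.1)).card := by
    rw [SimpleGraph.degree, SimpleGraph.neighborFinset_eq_filter]
    congr 1
    apply Finset.filter_congr
    intro w _
    simp only [SimpleGraph.comap_adj, SimpleGraph.top_adj]
    exact ne_comm
  have hsplit := Finset.card_filter_add_card_filter_not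
    (s := (Finset.univ : Finset (Σ i, V i))) (p := fun w => w.1 = v.1)
  have hcard : (Finset.univ.filter (fun w : Σ i, V i => w.1 = v.1)).card
      = Fintype.card (V v.1) := by
    rw [hfilter, Finset.card_map, Finset.card_univ]
  rw [hdeg, ← Finset.card_univ (α := Σ i, V i)]
  omega


theorem admissible_completeMultipartite_star_in_degree_partition
    {ι : Type*} [Fintype ι] [DecidableEq ι] (V : ι → Type*)
    [∀ i, Fintype (V i)] [∀ i, DecidableEq (V i)] [∀ i, Nonempty (V i)]
    (hr : 2 ≤ Fintype.card ι)
    (n m t : ℕ) (hn : n = Fintype.card (Σ i, V i))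
    (hm : m = (completeMultipartiteGraph V).edgeFinset.card)
    (hdvd : (n - 1) ∣ m)
    (hmax : (completeMultipartiteGraph V).maxDegree ≤ 2 * m / (n - 1))
    (ht : t = m / (n - 1)) :
    -- The classes of the degree partition correspond to the distinct part
    -- cardinalities `c`; the class of `c` has size `∑_{|A_i| = c} |A_i|`.
    ∃ y ∈ Finset.univ.image (fun i => Fintype.card (V i)),
      (∀ j ∈ Finset.univ.image (fun i => Fintype.card (V i)), j ≠ y →
          2 * t ≤
            (∑ i ∈ Finset.univ.filter (fun i => Fintype.card (V i) = y), Fintype.card (V i)) *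
            (∑ i ∈ Finset.univ.filter (fun i => Fintype.card (V i) = j), Fintype.card (V i)))
      ∨
      (∃ x ∈ Finset.univ.image (fun i => Fintype.card (V i)), x ≠ y ∧
          (Finset.univ.filter (fun i => Fintype.card (V i) = x)).card = 1 ∧
          ∀ j ∈ Finset.univ.image (fun i => Fintype.card (V i)), j ≠ y → j ≠ x →
            2 * t ≤
              (∑ i ∈ Finset.univ.filter (fun i => Fintype.card (V i) = y), Fintype.card (V i)) *
              (∑ i ∈ Finset.univ.filter (fun i => Fintype.card (V i) = j), Fintype.card (V i))) := by
  classical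
  set a : ι → ℕ := fun i => Fintype.card (V i) with ha
  set C : Finset ℕ := Finset.univ.image a with hC
  set S : ℕ → ℕ := fun c => ∑ i ∈ Finset.univ.filter (fun i => a i = c), a i with hSdef
  set rr : ℕ → ℕ := fun c => (Finset.univ.filter (fun i => a i = c)).card with hrr
  have hapos : ∀ i, 1 ≤ a i := fun i => Fintype.card_pos
  have hιne : Nonempty ι := Fintype.card_pos_iff.mp (by omega)
  have hCne : C.Nonempty := (Finset.univ_nonempty).image a
  have hS : ∀ c ∈ C, S c = c * rr c := by
    intro c hc
    rw [hSdef]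
    simp only
    rw [Finset.sum_congr rfl (fun i hi => (Finset.mem_filter.mp hi).2),
      Finset.sum_const, smul_eq_mul, mul_comm]
  have hrpos : ∀ c ∈ C, 1 ≤ rr c := by
    intro c hc
    obtain ⟨i, -, hi⟩ := Finset.mem_image.mp hc
    exact Finset.card_pos.mpr ⟨i, Finset.mem_filter.mpr ⟨Finset.mem_univ i, hi⟩⟩
  have hmaps : ∀ i ∈ (Finset.univ : Finset ι), a i ∈ C :=
    fun i _ => Finset.mem_image_of_mem a (Finset.mem_univ i)
  have hnsum : n = ∑ i, a i := by
    rw [hn]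
    exact Fintype.card_sigma
  have hnC : n = ∑ c ∈ C, S c := by
    rw [hnsum, ← Finset.sum_fiberwise_of_maps_to hmaps a]
  have hPC : (∑ c ∈ C, c * S c) = ∑ i, a i * a i := by
    rw [← Finset.sum_fiberwise_of_maps_to hmaps (fun i => a i * a i)]
    apply Finset.sum_congr rfl
    intro c hc
    rw [hSdef]
    simp only
    rw [Finset.mul_sum]
    apply Finset.sum_congr rfl
    intro i hi
    rw [(Finset.mem_filter.mp hi).2]
  have hn2 : 2 ≤ n := by
    have h1 : (Finset.univ : Finset ι).card ≤ ∑ i, a i := by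
      rw [Finset.card_eq_sum_ones]
      exact Finset.sum_le_sum (fun i _ => hapos i)
    rw [Finset.card_univ] at h1
    omega
  have hmt : m = t * (n - 1) := by
    rw [ht, Nat.div_mul_cancel hdvd]
  -- degree sum identity
  have hP : 2 * m + ∑ i, a i * a i = n * n := by
    have hdegsum := SimpleGraph.sum_degrees_eq_twice_card_edges (completeMultipartiteGraph V)
    have hcomb : ∑ v : Σ i, V i, ((completeMultipartiteGraph V).degree v + a v.1)
        = n * n := by
      rw [Finset.sum_congr rfl (fun v _ => star_deg_plus V v)]
      rw [Finset.sum_const, Finset.card_univ, ← hn, smul_eq_mul]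
    rw [Finset.sum_add_distrib, hdegsum] at hcomb
    have hsigma : ∑ v : Σ i, V i, a v.1 = ∑ i, a i * a i := by
      rw [← Finset.univ_sigma_univ, Finset.sum_sigma]
      apply Finset.sum_congr rfl
      intro i _
      show ∑ _s : V i, a i = a i * a i
      rw [Finset.sum_const, Finset.card_univ, smul_eq_mul, mul_comm]
    rw [hsigma] at hcomb
    rw [hm]
    exact hcomb
  have hPn : (∑ i, a i) ≤ ∑ i, a i * a i :=
    Finset.sum_le_sum (fun i _ => Nat.le_mul_of_pos_right _ (hapos i))
  have hmm : n * (n - 1) + n = n * n := by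
    have h : n - 1 + 1 = n := by omega
    calc n * (n - 1) + n = n * ((n - 1) + 1) := by ring
      _ = n * n := by rw [h]
  have h2tn : 2 * t ≤ n := by
    have hA : 2 * m + n ≤ n * n := by linarith [hP, hPn, hnsum.ge, hnsum.le]
    have h2 : 2 * m = 2 * (t * (n - 1)) := by rw [hmt]
    have h5 : (2 * t) * (n - 1) ≤ n * (n - 1) := by linarith [hA, hmm, h2]
    exact Nat.le_of_mul_le_mul_right h5 (by omega)
  set c₁ : ℕ := C.min' hCne with hc₁def
  have hc₁ : c₁ ∈ C := Finset.min'_mem _ _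
  have hc₁min : ∀ c ∈ C, c₁ ≤ c := fun c hc => Finset.min'_le _ _ hc
  have hc₁pos : 1 ≤ c₁ := by
    obtain ⟨i, -, hi⟩ := Finset.mem_image.mp hc₁
    rw [← hi]; exact hapos i
  have hnc₁ : n ≤ 2 * t + c₁ := by
    obtain ⟨i₀, -, hi₀⟩ := Finset.mem_image.mp hc₁
    obtain ⟨v₀⟩ := ‹∀ i, Nonempty (V i)› i₀
    have hdeg := star_deg_plus V ⟨i₀, v₀⟩
    have hle := SimpleGraph.degree_le_maxDegree (completeMultipartiteGraph V) ⟨i₀, v₀⟩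
    have h2mdiv : 2 * m / (n - 1) = 2 * t := by
      rw [hmt, show 2 * (t * (n - 1)) = 2 * t * (n - 1) from by ring]
      exact Nat.mul_div_cancel _ (by omega)
    rw [h2mdiv] at hmax
    rw [← hn] at hdeg
    have hlink : Fintype.card (V (⟨i₀, v₀⟩ : Σ i, V i).fst) = c₁ := hi₀
    omega
  set d : ℕ := n - 2 * t with hd
  have h2t : 2 * t + d = n := by omega
  have hdc : d ≤ c₁ := by omega
  by_cases honly : ∀ c ∈ C, c = c₁
  · refine ⟨c₁, hc₁, Or.inl ?_⟩
    intro j hj hne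
    exact absurd (honly j hj) hne
  · push_neg at honly
    obtain ⟨c₂, hc₂, hc₂ne⟩ := honly
    have hc₂2 : 2 ≤ c₂ := by
      have := hc₁min c₂ hc₂
      omega
    obtain ⟨i₂, -, hi₂⟩ := Finset.mem_image.mp hc₂
    have hPn2 : (∑ i, a i) + 2 ≤ ∑ i, a i * a i := by
      have e1 := Finset.add_sum_erase Finset.univ a (Finset.mem_univ i₂)
      have e2 := Finset.add_sum_erase Finset.univ (fun i => a i * a i) (Finset.mem_univ i₂)
      have h2a : 2 ≤ a i₂ := by omega
      have h3a : 2 * a i₂ ≤ a i₂ * a i₂ := Nat.mul_le_mul h2a (Nat.le_refl _)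
      have h4 : ∑ i ∈ Finset.univ.erase i₂, a i ≤ ∑ i ∈ Finset.univ.erase i₂, a i * a i :=
        Finset.sum_le_sum (fun i _ => Nat.le_mul_of_pos_right _ (hapos i))
      linarith [e1, e2, h3a, h4, h2a]
    have hd1 : 1 ≤ d := by
      by_contra h
      push_neg at h
      have h2teq : 2 * t = n := by omega
      have hA : 2 * m + n + 2 ≤ n * n := by linarith [hP, hPn2, hnsum.le, hnsum.ge]
      have h2 : 2 * m = 2 * (t * (n - 1)) := by rw [hmt]
      have h6 : 2 * (t * (n - 1)) = n * (n - 1) := by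
        rw [show n * (n-1) = (2 * t) * (n-1) from by rw [h2teq]]
        ring
      linarith [hA, h2, h6, hmm]
    have hkey : d * n + n = (∑ c ∈ C, c * S c) + d := by
      rw [hPC]
      zify
      have hdZ : (d : ℤ) = n - 2 * t := by
        omega
      have hmZ : (2 * m : ℤ) = 2 * t * ((n : ℤ) - 1) := by
        rw [hmt]
        push_cast [Nat.cast_sub (show 1 ≤ n by omega)]
        ring
      have hPZ : (2 * m : ℤ) + ∑ i, (a i : ℤ) * a i = (n : ℤ) * n := by
        exact_mod_cast hP
      linear_combination ((n : ℤ) - 1) * hdZ + hmZ - hPZ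
    obtain ⟨y, hy, hymax⟩ := Finset.exists_max_image C S hCne
    refine ⟨y, hy, ?_⟩
    exact star_core_lemma C S rr n d t c₁ y hc₁ hc₁min hymax hS hrpos hnC hd1 hdc hkey h2t
end

section
/- Let K be a finite simple graph and t a positive integer such that 2t divides the degree of every vertex of K. Then there exists a factorisation {F_1, …, F_t} of K such that for every vertex v and every i ∈ {1, …, t}, the degree of v in F_i equals deg_K(v)/t. -/
/-!
Orient `K` so that every vertex has in-degree equal to out-degree (an Eulerian orientation,
which exists because all degrees are even).  The arcs then form a bipartite multigraph between
a copy of the tails and a copy of the heads in which every degree `deg v / 2` is divisible by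
`t`.  Splitting each vertex into blocks of exactly `t` arcs makes this bipartite multigraph
`t`-regular, and by Hall's theorem it is the union of `t` perfect matchings.  Merging the blocks
back, each matching takes `deg v / (2t)` arcs out of and `deg v / (2t)` arcs into every vertex
`v`, so as an undirected graph it has degree `deg v / t`.
-/

open Finset SimpleGraph

/- A bipartite multigraph is a finset `E` of edges with endpoint maps `l : ι → α`, `r : ι → β`;
the definitions look at one side `f` at a time.  Perfect matchings of a `t`-regular multigraph
and the colour classes of the final colouring are both `IsShare _ E f t`. -/
namespace BipartiteMultigraph

variable {ι α β : Type*} [DecidableEq α] [DecidableEq β]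
  {E M : Finset ι} {f : ι → α} {l : ι → α} {r : ι → β} {t : ℕ}

def IsRegular (E : Finset ι) (f : ι → α) (t : ℕ) : Prop :=
  ∀ e ∈ E, #{e' ∈ E | f e' = f e} = t

def IsShare (M E : Finset ι) (f : ι → α) (t : ℕ) : Prop :=
  ∀ x, #{e ∈ M | f e = x} * t = #{e ∈ E | f e = x}

lemma card_filter_sdiff_add [DecidableEq ι] (hME : M ⊆ E) (p : ι → Prop) [DecidablePred p] :
    #{e ∈ E \ M | p e} + #{e ∈ M | p e} = #{e ∈ E | p e} := by
  rw [← card_union_of_disjoint (disjoint_filter_filter sdiff_disjoint), ← filter_union,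
    sdiff_union_of_subset hME]

lemma IsRegular.card_filter_mem (hE : IsRegular E f t) {S : Finset α} (hS : S ⊆ E.image f) :
    #{e ∈ E | f e ∈ S} = #S * t := by
  rw [card_eq_sum_card_fiberwise (s := {e ∈ E | f e ∈ S}) (t := S)
    (fun e he => (mem_filter.1 he).2), ← smul_eq_mul, ← sum_const]
  refine sum_congr rfl fun x hx => ?_
  obtain ⟨e, he, rfl⟩ := mem_image.1 (hS hx)
  rw [filter_filter, ← hE e he]
  exact congrArg card (filter_congr fun e' _ => ⟨And.right, fun h => ⟨h ▸ hx, h⟩⟩)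

lemma IsRegular.card_image_mul (hE : IsRegular E f t) : #(E.image f) * t = #E := by
  rw [← hE.card_filter_mem subset_rfl, filter_true_of_mem fun e he => mem_image_of_mem f he]

lemma IsRegular.hall (ht : 0 < t) (hl : IsRegular E l t) (hr : IsRegular E r t)
    (S : Finset (E.image l)) : #S ≤ #(S.biUnion fun x => {e ∈ E | l e = x}.image r) := by
  set N := S.biUnion fun x => {e ∈ E | l e = x}.image r
  have hN : N ⊆ E.image r := biUnion_subset.2 fun x _ => image_subset_image (filter_subset _ _)
  have hS : S.map (Function.Embedding.subtype _) ⊆ E.image l := fun x hx => by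
    obtain ⟨y, -, rfl⟩ := mem_map.1 hx
    exact y.2
  refine Nat.le_of_mul_le_mul_right ?_ ht
  rw [← card_map (Function.Embedding.subtype _), ← hl.card_filter_mem hS,
    ← hr.card_filter_mem hN]
  refine card_le_card fun e he => ?_
  simp only [mem_filter, mem_map, Function.Embedding.subtype_apply] at he ⊢
  obtain ⟨he, x, hx, hxe⟩ := he
  exact ⟨he, mem_biUnion.2 ⟨x, hx, mem_image_of_mem r (mem_filter.2 ⟨he, hxe.symm⟩)⟩⟩

lemma IsRegular.isShare_of_card_eq_one (hE : IsRegular E f t) (hME : M ⊆ E)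
    (hM : ∀ e ∈ E, #{e' ∈ M | f e' = f e} = 1) : IsShare M E f t := by
  intro x
  by_cases hx : ∃ e ∈ E, f e = x
  · obtain ⟨e, he, rfl⟩ := hx
    rw [hM e he, hE e he, one_mul]
  · rw [filter_false_of_mem fun e he hfe => hx ⟨e, he, hfe⟩,
      filter_false_of_mem fun e he hfe => hx ⟨e, hME he, hfe⟩, card_empty, zero_mul]

lemma IsRegular.exists_perfectMatching (ht : 0 < t) (hl : IsRegular E l t)
    (hr : IsRegular E r t) : ∃ M ⊆ E, IsShare M E l t ∧ IsShare M E r t := by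
  classical
  obtain ⟨g, hg, hgN⟩ := (all_card_le_biUnion_card_iff_exists_injective _).1 (hl.hall ht hr)
  have hedge (x : E.image l) : ∃ e ∈ E, l e = x ∧ r e = g x := by
    obtain ⟨e, he, hge⟩ := mem_image.1 (hgN x)
    exact ⟨e, (mem_filter.1 he).1, (mem_filter.1 he).2, hge⟩
  choose m hmE hml hmr using hedge
  have hg_surj : Set.SurjOn g (univ : Finset (E.image l)) (E.image r) := by
    refine surjOn_of_injOn_of_card_le g
      (fun x _ => image_subset_image (filter_subset _ _) (hgN x)) hg.injOn ?_
    rw [card_univ, Fintype.card_coe]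
    exact Nat.le_of_mul_le_mul_right (by rw [hl.card_image_mul, hr.card_image_mul]) ht
  have hM : univ.image m ⊆ E := fun e he => by
    obtain ⟨x, -, rfl⟩ := mem_image.1 he
    exact hmE x
  refine ⟨univ.image m, hM, hl.isShare_of_card_eq_one hM fun e he => ?_,
    hr.isShare_of_card_eq_one hM fun e he => ?_⟩
  · refine card_eq_one.2 ⟨m ⟨l e, mem_image_of_mem l he⟩, eq_singleton_iff_unique_mem.2 ⟨?_, ?_⟩⟩
    · exact mem_filter.2 ⟨mem_image_of_mem m (mem_univ _), hml _⟩
    · intro e' he'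
      obtain ⟨x, -, rfl⟩ := mem_image.1 (mem_filter.1 he').1
      exact congrArg m (Subtype.ext ((hml x).symm.trans (mem_filter.1 he').2))
  · obtain ⟨x, -, hx⟩ := hg_surj (mem_coe.2 (mem_image_of_mem r he))
    refine card_eq_one.2 ⟨m x, eq_singleton_iff_unique_mem.2 ⟨?_, ?_⟩⟩
    · exact mem_filter.2 ⟨mem_image_of_mem m (mem_univ _), (hmr x).trans hx⟩
    · intro e' he'
      obtain ⟨x', -, rfl⟩ := mem_image.1 (mem_filter.1 he').1
      rw [hg ((hmr x').symm.trans ((mem_filter.1 he').2.trans hx.symm))]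

lemma IsRegular.sdiff [DecidableEq ι] (hE : IsRegular E f (t + 1)) (hME : M ⊆ E)
    (hM : IsShare M E f (t + 1)) : IsRegular (E \ M) f t := by
  intro e he
  have hsplit := card_filter_sdiff_add hME (f · = f e)
  have hMe := hM (f e)
  rw [hE e (mem_sdiff.1 he).1] at hsplit hMe
  have : #{e' ∈ M | f e' = f e} = 1 := Nat.eq_of_mul_eq_mul_right t.succ_pos (by rwa [one_mul])
  omega

lemma IsShare.of_sdiff [DecidableEq ι] {C : Finset ι} (hC : IsShare C (E \ M) f t) (ht : 0 < t)
    (hME : M ⊆ E) (hM : IsShare M E f (t + 1)) : IsShare C E f (t + 1) := by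
  intro x
  have hsplit := card_filter_sdiff_add hME (f · = x)
  rw [← hM x, ← hC x] at hsplit
  have : #{e ∈ C | f e = x} = #{e ∈ M | f e = x} := Nat.eq_of_mul_eq_mul_right ht (by linarith)
  rw [this, hM x]

theorem IsRegular.exists_coloring [DecidableEq ι] (ht : 0 < t) (hl : IsRegular E l t)
    (hr : IsRegular E r t) :
    ∃ c : ι → Fin t, ∀ i, IsShare {e ∈ E | c e = i} E l t ∧ IsShare {e ∈ E | c e = i} E r t := by
  induction t, ht using Nat.le_induction generalizing E with
  | base =>
    refine ⟨0, fun i => ?_⟩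
    rw [filter_true_of_mem fun e _ => Subsingleton.elim _ i]
    exact ⟨fun x => mul_one _, fun x => mul_one _⟩
  | succ t ht ih =>
    obtain ⟨M, hME, hMl, hMr⟩ := hl.exists_perfectMatching t.succ_pos hr
    obtain ⟨c, hc⟩ := ih (hl.sdiff hME hMl) (hr.sdiff hME hMr)
    set c' : ι → Fin (t + 1) := fun e => if e ∈ M then Fin.last t else (c e).castSucc
    refine ⟨c', Fin.lastCases ?_ fun j => ?_⟩
    · have hlast : {e ∈ E | c' e = Fin.last t} = M := by
        ext e
        by_cases he : e ∈ M
        · simp [c', he, hME he]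
        · simp [c', he, Fin.castSucc_ne_last]
      rw [hlast]
      exact ⟨hMl, hMr⟩
    · have hj : {e ∈ E | c' e = j.castSucc} = {e ∈ E \ M | c e = j} := by
        ext e
        by_cases he : e ∈ M <;> simp [c', he, (Fin.castSucc_ne_last j).symm]
      rw [hj]
      exact ⟨(hc j).1.of_sdiff ht hME hMl, (hc j).2.of_sdiff ht hME hMr⟩

lemma exists_blocks [DecidableEq ι] (S : Finset ι) (h : t ∣ #S) :
    ∃ q : ι → ℕ, ∀ e ∈ S, #{e' ∈ S | q e' = q e} = t := by
  induction S using Finset.strongInduction with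
  | H S ih =>
  rcases S.eq_empty_or_nonempty with rfl | hne
  · exact ⟨0, by simp⟩
  have ht : 0 < t := Nat.pos_of_ne_zero fun h0 => hne.card_pos.ne' (by simpa [h0] using h)
  obtain ⟨T, hTS, hT⟩ := exists_subset_card_eq (Nat.le_of_dvd hne.card_pos h)
  obtain ⟨q, hq⟩ := ih (S \ T) (sdiff_ssubset hTS (card_pos.1 (hT ▸ ht)))
    (by rw [card_sdiff_of_subset hTS, hT]; exact Nat.dvd_sub h dvd_rfl)
  refine ⟨fun e => if e ∈ T then 0 else q e + 1, fun e he => ?_⟩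
  by_cases heT : e ∈ T
  · rw [← hT]
    congr 1
    ext e'
    by_cases he' : e' ∈ T
    · simp [heT, he', hTS he']
    · simp [heT, he']
  · rw [← hq e (mem_sdiff.2 ⟨he, heT⟩)]
    congr 1
    ext e'
    by_cases he' : e' ∈ T <;> simp [heT, he']

lemma exists_isRegular_refinement [DecidableEq ι] (h : ∀ x, t ∣ #{e ∈ E | f e = x}) :
    ∃ q : ι → ℕ, IsRegular E (fun e => (f e, q e)) t := by
  choose q hq using fun x => exists_blocks _ (h x)
  refine ⟨fun e => q (f e) e, fun e he => ?_⟩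
  rw [← hq (f e) e (mem_filter.2 ⟨he, rfl⟩), filter_filter]
  refine congrArg card (filter_congr fun e' _ => ?_)
  by_cases hfe : f e' = f e <;> simp [hfe]

lemma IsShare.comp (h : IsShare M E f t) (hME : M ⊆ E) (g : α → β) : IsShare M E (g ∘ f) t := by
  intro z
  have hfib (N : Finset ι) (hN : N ⊆ E) :
      #{e ∈ N | g (f e) = z} = ∑ x ∈ E.image f with g x = z, #{e ∈ N | f e = x} := by
    rw [card_eq_sum_card_fiberwise (f := f) (t := {x ∈ E.image f | g x = z}) fun e he =>
      mem_filter.2 ⟨mem_image_of_mem f (hN (mem_filter.1 he).1), (mem_filter.1 he).2⟩]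
    refine sum_congr rfl fun x hx => congrArg card ?_
    rw [filter_filter]
    exact filter_congr fun e _ => ⟨And.right, fun h' => ⟨h' ▸ (mem_filter.1 hx).2, h'⟩⟩
  simp only [Function.comp_apply]
  rw [hfib M hME, hfib E subset_rfl, sum_mul]
  exact sum_congr rfl fun x _ => h x

theorem exists_coloring_of_dvd [DecidableEq ι] (ht : 0 < t) (hl : ∀ x, t ∣ #{e ∈ E | l e = x})
    (hr : ∀ y, t ∣ #{e ∈ E | r e = y}) :
    ∃ c : ι → Fin t, ∀ i, IsShare {e ∈ E | c e = i} E l t ∧ IsShare {e ∈ E | c e = i} E r t := by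
  obtain ⟨ql, hql⟩ := exists_isRegular_refinement hl
  obtain ⟨qr, hqr⟩ := exists_isRegular_refinement hr
  obtain ⟨c, hc⟩ := hql.exists_coloring ht hqr
  exact ⟨c, fun i => ⟨(hc i).1.comp (filter_subset _ _) Prod.fst,
    (hc i).2.comp (filter_subset _ _) Prod.fst⟩⟩

end BipartiteMultigraph

namespace Arcs

variable {V : Type*}

lemma mem_map_uncurry_mk_iff {A : Multiset (V × V)} {u w : V} :
    s(u, w) ∈ A.map Sym2.mk.uncurry ↔ (u, w) ∈ A ∨ (w, u) ∈ A := by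
  simp only [Multiset.mem_map, Prod.exists, Function.uncurry_apply_pair, Sym2.eq_iff]
  aesop

lemma nodup_map_uncurry_mk {D : Finset (V × V)} (hD : ∀ p ∈ D, p.swap ∉ D) :
    (D.val.map Sym2.mk.uncurry).Nodup := by
  refine D.nodup.map_on fun p hp q hq hpq => ?_
  rcases Sym2.mk_eq_mk_iff.1 hpq with h | h
  · exact h
  · exact absurd (h ▸ hp) (by simpa using hD q hq)

variable [DecidableEq V]

def IsBalanced (B : Multiset (V × V)) : Prop :=
  ∀ v, B.countP (·.1 = v) = B.countP (·.2 = v)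

lemma IsBalanced.exists_subdivide {B : Multiset (V × V)} {M : Multiset (Sym2 V)} {a b : V}
    (hB : IsBalanced B) (hBM : B.map Sym2.mk.uncurry = s(a, b) ::ₘ M) (v : V) :
    ∃ B', IsBalanced B' ∧ B'.map Sym2.mk.uncurry = s(v, a) ::ₘ s(v, b) ::ₘ M := by
  obtain ⟨⟨x, y⟩, hq, hxy⟩ := Multiset.mem_map.1 (hBM ▸ Multiset.mem_cons_self _ _)
  obtain ⟨B₂, rfl⟩ := Multiset.exists_cons_of_mem hq
  rw [Multiset.map_cons, hxy, Multiset.cons_inj_right] at hBM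
  rw [Function.uncurry_apply_pair] at hxy
  refine ⟨(x, v) ::ₘ (v, y) ::ₘ B₂, fun u => ?_, ?_⟩
  · have := hB u
    simp only [Multiset.countP_cons] at this ⊢
    omega
  · rw [Multiset.map_cons, Multiset.map_cons, hBM, Function.uncurry_apply_pair,
      Function.uncurry_apply_pair]
    rcases Sym2.eq_iff.1 hxy with ⟨rfl, rfl⟩ | ⟨rfl, rfl⟩
    · rw [Sym2.eq_swap]
    · rw [Sym2.eq_swap, Multiset.cons_swap]

theorem exists_isBalanced_map_mk_eq (A : Multiset (V × V))
    (hA : ∀ v, Even (A.countP (·.1 = v) + A.countP (·.2 = v))) :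
    ∃ B, IsBalanced B ∧ B.map Sym2.mk.uncurry = A.map Sym2.mk.uncurry := by
  induction hn : Multiset.card A using Nat.strong_induction_on generalizing A with
  | _ n ih =>
  rcases Multiset.empty_or_exists_mem A with rfl | ⟨⟨v, a⟩, hva⟩
  · exact ⟨0, fun _ => rfl, rfl⟩
  obtain ⟨A₁, rfl⟩ := Multiset.exists_cons_of_mem hva
  by_cases hloop : v = a
  · subst hloop
    obtain ⟨B₁, hB₁, hB₁A⟩ := ih _ (by simp [← hn]) A₁ (fun u => by
      have := hA u
      simp only [Multiset.countP_cons, Nat.even_iff] at this ⊢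
      omega) rfl
    refine ⟨(v, v) ::ₘ B₁, fun u => ?_, by simp [hB₁A]⟩
    simp only [Multiset.countP_cons, hB₁ u]
  have hpar := hA v
  obtain ⟨⟨x, y⟩, hp, hxy⟩ : ∃ p ∈ A₁, p.1 = v ∨ p.2 = v := by
    by_contra! h
    rw [Multiset.countP_cons, Multiset.countP_cons,
      Multiset.countP_eq_zero.2 fun p hp => (h p hp).1,
      Multiset.countP_eq_zero.2 fun p hp => (h p hp).2] at hpar
    simp [Ne.symm hloop] at hpar
  obtain ⟨A₂, rfl⟩ := Multiset.exists_cons_of_mem hp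
  obtain ⟨b, hb, hends⟩ : ∃ b, s(x, y) = s(v, b) ∧
      ∀ u, (if x = u then 1 else 0) + (if y = u then 1 else 0) =
        (if v = u then 1 else 0) + (if b = u then 1 else 0) := by
    rcases hxy with rfl | rfl
    · exact ⟨y, rfl, fun _ => rfl⟩
    · exact ⟨x, Sym2.eq_swap, fun _ => add_comm _ _⟩
  -- Short-cut the two arcs at `v` by one arc `(a, b)`, orient the smaller multigraph and
  -- subdivide that arc by `v` again.
  obtain ⟨B', hB', hB'A⟩ := ih _ (by simp [← hn]) ((a, b) ::ₘ A₂) (fun u => by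
    have := hA u
    have := hends u
    simp only [Multiset.countP_cons, Nat.even_iff] at *
    omega) rfl
  obtain ⟨B, hB, hBA⟩ := hB'.exists_subdivide (by rw [hB'A, Multiset.map_cons]; rfl) v
  exact ⟨B, hB, by rw [hBA]; simp [hb]⟩

end Arcs

namespace SimpleGraph

variable {V : Type*}

lemma exists_orientation [Fintype V] (G : SimpleGraph V) [DecidableRel G.Adj] :
    ∃ D : Finset (V × V), G = (fromRel fun u w => (u, w) ∈ D) ∧ ∀ p ∈ D, p.swap ∉ D := by
  let n := Fintype.equivFin V
  refine ⟨({p | G.Adj p.1 p.2 ∧ n p.1 < n p.2} : Finset (V × V)), ?_, fun p hp hp' => ?_⟩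
  · ext u w
    simp only [fromRel_adj, mem_filter, mem_univ, true_and]
    constructor
    · intro h
      refine ⟨h.ne, ?_⟩
      rcases lt_or_gt_of_ne (n.injective.ne h.ne) with hlt | hlt
      · exact Or.inl ⟨h, hlt⟩
      · exact Or.inr ⟨h.symm, hlt⟩
    · rintro ⟨-, ⟨h, -⟩ | ⟨h, -⟩⟩
      · exact h
      · exact h.symm
  · simp only [mem_filter, Prod.fst_swap, Prod.snd_swap] at hp hp'
    exact lt_asymm hp.2.2 hp'.2.2

lemma existsUnique_mem_edgeSet_fromRel_filter {κ : Type*} [DecidableEq κ] {D : Finset (V × V)}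
    (hD : ∀ p ∈ D, p.swap ∉ D) (c : V × V → κ) {e : Sym2 V}
    (he : e ∈ (fromRel fun u w => (u, w) ∈ D).edgeSet) :
    ∃! i, e ∈ (fromRel fun u w => (u, w) ∈ {p ∈ D | c p = i}).edgeSet := by
  induction e using Sym2.ind with
  | _ u w =>
  simp only [mem_edgeSet, fromRel_adj, mem_filter] at he ⊢
  obtain ⟨huw, h | h⟩ := he
  · refine ⟨c (u, w), ⟨huw, Or.inl ⟨h, rfl⟩⟩, fun i hi => ?_⟩
    obtain ⟨-, ⟨-, rfl⟩ | ⟨h', -⟩⟩ := hi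
    · rfl
    · exact absurd h' (hD _ h)
  · refine ⟨c (w, u), ⟨huw, Or.inr ⟨h, rfl⟩⟩, fun i hi => ?_⟩
    obtain ⟨-, ⟨h', -⟩ | ⟨-, rfl⟩⟩ := hi
    · exact absurd h' (hD _ h)
    · rfl

variable [DecidableEq V]

lemma ncard_neighborSet_fromRel {D : Finset (V × V)} (hD : ∀ p ∈ D, p.swap ∉ D) (v : V) :
    ((fromRel fun u w => (u, w) ∈ D).neighborSet v).ncard =
      #{p ∈ D | p.1 = v} + #{p ∈ D | p.2 = v} := by
  have hset : (fromRel fun u w => (u, w) ∈ D).neighborSet v =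
      ↑({p ∈ D | p.1 = v}.image Prod.snd ∪ {p ∈ D | p.2 = v}.image Prod.fst) := by
    ext w
    simp only [mem_neighborSet, fromRel_adj, coe_union, coe_image, coe_filter, Set.mem_union,
      Set.mem_image, Set.mem_ofPred_eq, Prod.exists]
    constructor
    · rintro ⟨-, h | h⟩
      · exact Or.inl ⟨v, w, ⟨h, rfl⟩, rfl⟩
      · exact Or.inr ⟨w, v, ⟨h, rfl⟩, rfl⟩
    · rintro (⟨_, _, ⟨h, rfl⟩, rfl⟩ | ⟨_, _, ⟨h, rfl⟩, rfl⟩)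
      · exact ⟨fun hvw => hD _ h (by subst hvw; exact h), Or.inl h⟩
      · exact ⟨fun hvw => hD _ h (by subst hvw; exact h), Or.inr h⟩
  have hdisj :
      Disjoint ({p ∈ D | p.1 = v}.image Prod.snd) ({p ∈ D | p.2 = v}.image Prod.fst) := by
    refine Finset.disjoint_left.2 fun w hw hw' => ?_
    simp only [mem_image, mem_filter, Prod.exists] at hw hw'
    obtain ⟨_, _, ⟨h, rfl⟩, rfl⟩ := hw
    obtain ⟨_, _, ⟨h', rfl⟩, rfl⟩ := hw'
    exact hD _ h h'
  rw [hset, Set.ncard_coe_finset, card_union_of_disjoint hdisj,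
    card_image_of_injOn fun p hp q hq h =>
      Prod.ext ((mem_filter.1 hp).2.trans (mem_filter.1 hq).2.symm) h,
    card_image_of_injOn fun p hp q hq h =>
      Prod.ext h ((mem_filter.1 hp).2.trans (mem_filter.1 hq).2.symm)]

lemma degree_eq_card_add_card_of_eq_fromRel {G : SimpleGraph V} {D : Finset (V × V)}
    (hG : G = fromRel fun u w => (u, w) ∈ D) (hD : ∀ p ∈ D, p.swap ∉ D) (v : V)
    [Fintype (G.neighborSet v)] : G.degree v = #{p ∈ D | p.1 = v} + #{p ∈ D | p.2 = v} := by
  subst hG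
  rw [← card_neighborSet_eq_degree, ← Nat.card_eq_fintype_card, Nat.card_coe_set_eq,
    ncard_neighborSet_fromRel hD]

theorem exists_balanced_orientation [Fintype V] (G : SimpleGraph V) [DecidableRel G.Adj]
    (h : ∀ v, Even (G.degree v)) :
    ∃ D : Finset (V × V), G = (fromRel fun u w => (u, w) ∈ D) ∧ (∀ p ∈ D, p.swap ∉ D) ∧
      ∀ v, #{p ∈ D | p.1 = v} = #{p ∈ D | p.2 = v} := by
  obtain ⟨D₀, hG, hD₀⟩ := G.exists_orientation
  have hpar (v : V) : Even (D₀.val.countP (·.1 = v) + D₀.val.countP (·.2 = v)) := by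
    simpa only [Multiset.countP_eq_card_filter, ← filter_val, card_val,
      degree_eq_card_add_card_of_eq_fromRel hG hD₀] using h v
  obtain ⟨B, hB, hBD⟩ := Arcs.exists_isBalanced_map_mk_eq D₀.val hpar
  have hBnodup : (B.map Sym2.mk.uncurry).Nodup := hBD ▸ Arcs.nodup_map_uncurry_mk hD₀
  refine ⟨⟨B, hBnodup.of_map _⟩, ?_, fun p hp hp' => ?_, fun v => ?_⟩
  · rw [hG]
    ext u w
    simp only [fromRel_adj, Finset.mem_mk, ← Arcs.mem_map_uncurry_mk_iff, hBD]
    rw [Arcs.mem_map_uncurry_mk_iff, mem_val, mem_val]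
  · obtain ⟨a, b⟩ := p
    have hab := Multiset.inj_on_of_nodup_map hBnodup _ hp _ hp' Sym2.eq_swap
    obtain rfl : a = b := (Prod.ext_iff.1 hab).1
    have haa : s(a, a) ∈ D₀.val.map Sym2.mk.uncurry := hBD ▸ Multiset.mem_map_of_mem _ hp
    rw [Arcs.mem_map_uncurry_mk_iff, or_self] at haa
    exact hD₀ _ haa haa
  · have hv := hB v
    rwa [Multiset.countP_eq_card_filter, Multiset.countP_eq_card_filter] at hv

end SimpleGraph

theorem factorisation_of_graph_with_degrees_divisible_by_two_t_general
    {V : Type*} [Fintype V] (K : SimpleGraph V) [DecidableRel K.Adj]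
    (t : ℕ) (ht : 0 < t) (hdvd : ∀ v, 2 * t ∣ K.degree v) :
    ∃ F : Fin t → SimpleGraph V,
      (∀ i, F i ≤ K) ∧
      (∀ e ∈ K.edgeSet, ∃! i, e ∈ (F i).edgeSet) ∧
      (∀ i v, ((F i).neighborSet v).ncard = K.degree v / t) := by
  classical
  obtain ⟨D, hK, hD, hbal⟩ := exists_balanced_orientation K fun v =>
    even_iff_two_dvd.2 ((dvd_mul_right 2 t).trans (hdvd v))
  have hdeg (v : V) : K.degree v = 2 * #{p ∈ D | p.1 = v} := by
    rw [degree_eq_card_add_card_of_eq_fromRel hK hD, ← hbal, two_mul]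
  have hout (v : V) : t ∣ #{p ∈ D | p.1 = v} :=
    Nat.dvd_of_mul_dvd_mul_left two_pos (hdeg v ▸ hdvd v)
  obtain ⟨c, hc⟩ := BipartiteMultigraph.exists_coloring_of_dvd (l := Prod.fst) (r := Prod.snd)
    ht hout fun v => hbal v ▸ hout v
  refine ⟨fun i => fromRel fun u w => (u, w) ∈ {p ∈ D | c p = i}, fun i u w huw => ?_,
    fun e he => existsUnique_mem_edgeSet_fromRel_filter hD c (hK ▸ he), fun i v => ?_⟩
  · rw [fromRel_adj] at huw
    rw [hK, fromRel_adj]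
    exact ⟨huw.1, huw.2.imp (mem_filter.1 · |>.1) (mem_filter.1 · |>.1)⟩
  · have hout_i := (hc i).1 v
    have hin_i := (hc i).2 v
    rw [← hbal] at hin_i
    rw [ncard_neighborSet_fromRel fun p hp hp' => hD p (mem_filter.1 hp).1 (mem_filter.1 hp').1,
      hdeg, ← hout_i, Nat.eq_of_mul_eq_mul_right ht (hin_i.trans hout_i.symm), ← mul_assoc,
      Nat.mul_div_cancel _ ht, two_mul]

theorem factorisation_of_graph_with_degrees_divisible_by_two_t
    {V : Type*} [Fintype V] [DecidableEq V] (K : SimpleGraph V) [DecidableRel K.Adj]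
    (t : ℕ) (ht : 0 < t) (hdvd : ∀ v, 2 * t ∣ K.degree v) :
    ∃ F : Fin t → SimpleGraph V,
      (∀ i, F i ≤ K) ∧
      (∀ e ∈ K.edgeSet, ∃! i, e ∈ (F i).edgeSet) ∧
      (∀ i v, ((F i).neighborSet v).ncard = K.degree v / t) :=
  factorisation_of_graph_with_degrees_divisible_by_two_t_general K t ht hdvd
end

section
/- Let K be a complete multipartite graph with parts A_1, …, A_r and let {G_1, …, G_t} be any factorisation of K. Then there exists a factorisation {F_1, …, F_t} of K such that for each i ∈ {1, …, t}: (1) for every pair of distinct parts A_j, A_k, the number of edges of F_i with one endpoint in A_j and the other in A_k equals the number of such edges of G_i; and (2) F_i is almost regular on each part A_j. -/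
open SimpleGraph

/-!
Encode a factorisation as an edge colouring, and among all colourings with the same number of
edges of each colour between any two parts choose one minimising the sum of the squares of all
colour degrees. Suppose two vertices `U`, `W` of one part had degrees differing by at least two
in a colour `c₀`. Every vertex `x` outside their part gives an arc `col s(U, x) → col s(W, x)`
between colours, and a trail of such arcs leads from `c₀` to a colour `c₁` in which `W` has the
larger degree. Exchanging the colours of `s(U, x)` and `s(W, x)` along the trail moves one unit of
`U`'s degree from `c₀` to `c₁` and one unit of `W`'s from `c₁` to `c₀`; as `U` and `W` lie in the
same part the counts between parts are unchanged, but the sum of squares drops.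
-/

open Finset

/-- Each `x : ε` is an arc from `(e x).1` to `(e x).2`; `IsEdgeTrail e a X b` says that the arcs in
`X`, each used once, form a directed trail from `a` to `b`. -/
inductive IsEdgeTrail {ε β : Type*} [DecidableEq ε] (e : ε → β × β) (a : β) :
    Finset ε → β → Prop
  | nil : IsEdgeTrail e a ∅ a
  | cons {X : Finset ε} {b : β} {x : ε} :
      IsEdgeTrail e a X b → x ∉ X → (e x).1 = b → IsEdgeTrail e a (insert x X) (e x).2

namespace IsEdgeTrail

variable {ε β : Type*} [DecidableEq ε] {e : ε → β × β} {a b : β} {X : Finset ε}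

theorem exists_subset_of_mem (h : IsEdgeTrail e a X b) {x : ε} (hx : x ∈ X) :
    ∃ Y ⊆ X, IsEdgeTrail e a Y (e x).2 := by
  induction h with
  | nil => simp at hx
  | @cons X b y h hy hb ih =>
    rcases mem_insert.1 hx with rfl | hx
    · exact ⟨_, subset_rfl, h.cons hy hb⟩
    · obtain ⟨Y, hY, hY'⟩ := ih hx
      exact ⟨Y, hY.trans (subset_insert _ _), hY'⟩

theorem exists_subset_insert (h : IsEdgeTrail e a X b) {x : ε} (hb : (e x).1 = b) :
    ∃ Y ⊆ insert x X, IsEdgeTrail e a Y (e x).2 := by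
  by_cases hx : x ∈ X
  · obtain ⟨Y, hY, hY'⟩ := h.exists_subset_of_mem hx
    exact ⟨Y, hY.trans (subset_insert _ _), hY'⟩
  · exact ⟨_, subset_rfl, h.cons hx hb⟩

theorem sum_single_sub_single [DecidableEq β] (h : IsEdgeTrail e a X b) :
    ∑ x ∈ X, (Pi.single (e x).2 1 - Pi.single (e x).1 1 : β → ℤ) =
      Pi.single b 1 - Pi.single a 1 := by
  induction h with
  | nil => simp
  | @cons X b x h hx hb ih =>
    rw [sum_insert hx, ih, hb]
    abel

end IsEdgeTrail

theorem exists_isEdgeTrail_of_lt {ε β : Type*} [DecidableEq ε] [Fintype β] [DecidableEq β]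
    (N : Finset ε) (e : ε → β × β) {a : β}
    (ha : (∑ x ∈ N, (Pi.single (e x).2 1 : β → ℤ)) a <
      (∑ x ∈ N, (Pi.single (e x).1 1 : β → ℤ)) a) :
    ∃ b, (∑ x ∈ N, (Pi.single (e x).1 1 : β → ℤ)) b <
      (∑ x ∈ N, (Pi.single (e x).2 1 : β → ℤ)) b ∧ ∃ X ⊆ N, IsEdgeTrail e a X b := by
  classical
  set R : Finset β := {b | ∃ X ⊆ N, IsEdgeTrail e a X b}
  have haR : a ∈ R := by simpa [R] using ⟨∅, empty_subset N, IsEdgeTrail.nil⟩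
  have hR : ∀ x ∈ N, (e x).1 ∈ R → (e x).2 ∈ R := by
    simp only [R, mem_filter, mem_univ, true_and]
    rintro x hx ⟨X, hXN, hX⟩
    obtain ⟨Y, hY, hY'⟩ := hX.exists_subset_insert (x := x) rfl
    exact ⟨Y, hY.trans (insert_subset hx hXN), hY'⟩
  have hsum (f : ε → β) : ∑ b ∈ R, (∑ x ∈ N, (Pi.single (f x) 1 : β → ℤ)) b =
      ∑ x ∈ N, if f x ∈ R then 1 else 0 := by
    simp only [Finset.sum_apply]
    rw [sum_comm]
    simp
  suffices ∃ b ∈ R, (∑ x ∈ N, (Pi.single (e x).1 1 : β → ℤ)) b <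
      (∑ x ∈ N, (Pi.single (e x).2 1 : β → ℤ)) b by
    obtain ⟨b, hb, hlt⟩ := this
    exact ⟨b, hlt, by simpa [R] using hb⟩
  by_contra! hle
  -- `R` is closed under arcs from `N`, so its total out-degree is at most its total in-degree.
  have hout_le_in : ∑ b ∈ R, (∑ x ∈ N, (Pi.single (e x).1 1 : β → ℤ)) b ≤
      ∑ b ∈ R, (∑ x ∈ N, (Pi.single (e x).2 1 : β → ℤ)) b := by
    rw [hsum, hsum]
    gcongr with x hx
    split_ifs <;> simp_all
  exact (sum_lt_sum hle ⟨a, haR, ha⟩).not_ge hout_le_in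

theorem sum_sq_add_single_sub_single {κ : Type*} [Fintype κ] [DecidableEq κ] (d : κ → ℤ)
    {a b : κ} (hab : a ≠ b) :
    ∑ c, (d + (Pi.single b 1 - Pi.single a 1 : κ → ℤ)) c ^ 2 =
      ∑ c, d c ^ 2 + 2 * (d b - d a + 1) := by
  rw [← sub_eq_iff_eq_add', ← sum_sub_distrib, Fintype.sum_eq_add b a hab.symm]
  · simp [hab, hab.symm]
    ring
  · rintro c ⟨hcb, hca⟩
    simp [hcb, hca]

namespace MultipartiteColouring

variable {α ι κ : Type*}

def colourClass (p : α → ι) (col : Sym2 α → κ) (c : κ) : SimpleGraph α where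
  Adj a b := p a ≠ p b ∧ col s(a, b) = c
  symm := ⟨fun _ _ h => ⟨h.1.symm, Sym2.eq_swap ▸ h.2⟩⟩
  loopless := ⟨fun _ h => h.1 rfl⟩

@[simp]
theorem colourClass_adj {p : α → ι} {col : Sym2 α → κ} {c : κ} {a b : α} :
    (colourClass p col c).Adj a b ↔ p a ≠ p b ∧ col s(a, b) = c :=
  Iff.rfl

theorem colourClass_le (p : α → ι) (col : Sym2 α → κ) (c : κ) :
    colourClass p col c ≤ (⊤ : SimpleGraph ι).comap p :=
  fun _ _ h => h.1

theorem existsUnique_mem_edgeSet_colourClass (p : α → ι) (col : Sym2 α → κ) {e : Sym2 α}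
    (he : e ∈ ((⊤ : SimpleGraph ι).comap p).edgeSet) :
    ∃! c, e ∈ (colourClass p col c).edgeSet := by
  induction e using Sym2.ind with
  | _ a b => exact ⟨col s(a, b), ⟨he, rfl⟩, fun _ hc => hc.2.symm⟩

theorem exists_colourClass_eq [Nonempty κ] (p : α → ι) (G : κ → SimpleGraph α)
    (hle : ∀ c, G c ≤ (⊤ : SimpleGraph ι).comap p)
    (hpart : ∀ e ∈ ((⊤ : SimpleGraph ι).comap p).edgeSet, ∃! c, e ∈ (G c).edgeSet) :
    ∃ col : Sym2 α → κ, ∀ c, colourClass p col c = G c := by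
  have hcol (e : Sym2 α) :
      ∃ c, e ∈ ((⊤ : SimpleGraph ι).comap p).edgeSet → e ∈ (G c).edgeSet := by
    by_cases he : e ∈ ((⊤ : SimpleGraph ι).comap p).edgeSet
    · obtain ⟨c, hc, -⟩ := hpart e he
      exact ⟨c, fun _ => hc⟩
    · exact ⟨Classical.arbitrary κ, fun h => absurd h he⟩
  choose col hcol using hcol
  refine ⟨col, fun c => ?_⟩
  ext a b
  constructor
  · rintro ⟨hab, rfl⟩
    exact hcol s(a, b) hab
  · intro h
    have hab := hle c h
    exact ⟨hab, (hpart s(a, b) hab).unique (hcol s(a, b) hab) h⟩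

noncomputable def crossCount (p : α → ι) (H : SimpleGraph α) (j k : ι) : ℕ :=
  {q : α × α | H.Adj q.1 q.2 ∧ p q.1 = j ∧ p q.2 = k}.ncard

section Recolour

variable [DecidableEq α]

def swapPair (U W : α) (X : Finset α) (q : α × α) : α × α :=
  if q.1 ∈ X ∨ q.2 ∈ X then Prod.map (Equiv.swap U W) (Equiv.swap U W) q else q

/-- Exchanges the colours of `s(U, x)` and `s(W, x)` for every `x ∈ X`. -/
def recolour (col : Sym2 α → κ) (U W : α) (X : Finset α) (e : Sym2 α) : κ :=
  col (if ∃ x ∈ X, x ∈ e then e.map (Equiv.swap U W) else e)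

variable {col : Sym2 α → κ} {U W : α} {X : Finset α}

theorem recolour_mk (a b : α) :
    recolour col U W X s(a, b) =
      col s((swapPair U W X (a, b)).1, (swapPair U W X (a, b)).2) := by
  simp only [recolour, swapPair, Sym2.mem_iff, and_or_left, exists_or, exists_eq_right]
  split_ifs <;> rfl

theorem recolour_comm : recolour col U W X = recolour col W U X := by
  funext e
  rw [recolour, recolour, Equiv.swap_comm]

theorem apply_swap_eq {p : α → ι} (hUW : p U = p W) (a : α) :
    p (Equiv.swap U W a) = p a := by
  rw [Equiv.swap_apply_def]
  split_ifs with hU hW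
  · rw [hU, hUW]
  · rw [hW, hUW]
  · rfl

theorem swap_apply_of_mem (hU : U ∉ X) (hW : W ∉ X) {x : α} (hx : x ∈ X) :
    Equiv.swap U W x = x :=
  Equiv.swap_apply_of_ne_of_ne (ne_of_mem_of_not_mem hx hU) (ne_of_mem_of_not_mem hx hW)

theorem swapPair_involutive (hU : U ∉ X) (hW : W ∉ X) :
    Function.Involutive (swapPair U W X) := by
  rintro ⟨a, b⟩
  by_cases h : a ∈ X ∨ b ∈ X
  · have h' : Equiv.swap U W a ∈ X ∨ Equiv.swap U W b ∈ X := by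
      rcases h with h | h
      · exact .inl ((swap_apply_of_mem hU hW h).symm ▸ h)
      · exact .inr ((swap_apply_of_mem hU hW h).symm ▸ h)
    simp [swapPair, h, h']
  · simp [swapPair, h]

theorem crossCount_colourClass_recolour {p : α → ι} (hUW : p U = p W) (hU : U ∉ X)
    (hW : W ∉ X) (c : κ) (j k : ι) :
    crossCount p (colourClass p (recolour col U W X) c) j k =
      crossCount p (colourClass p col c) j k := by
  have hp (q : α × α) :
      p (swapPair U W X q).1 = p q.1 ∧ p (swapPair U W X q).2 = p q.2 := by
    unfold swapPair
    split_ifs <;> simp [apply_swap_eq hUW]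
  have hinv := swapPair_involutive hU hW
  have hpre : {q : α × α | (colourClass p (recolour col U W X) c).Adj q.1 q.2 ∧ p q.1 = j ∧
      p q.2 = k} = swapPair U W X ⁻¹'
        {q | (colourClass p col c).Adj q.1 q.2 ∧ p q.1 = j ∧ p q.2 = k} := by
    ext q
    simp only [Set.mem_ofPred_eq, Set.mem_preimage, colourClass_adj, recolour_mk, (hp q).1,
      (hp q).2]
  rw [crossCount, crossCount, hpre, Set.ncard_preimage_of_injective_subset_range hinv.injective
    (by rw [hinv.surjective.range_eq]; exact Set.subset_univ _)]

end Recolour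

section Degrees

variable [Fintype α] [DecidableEq ι] [DecidableEq κ]

def colourDegrees (p : α → ι) (col : Sym2 α → κ) (v : α) : κ → ℤ :=
  ∑ x ∈ {x | p v ≠ p x}, Pi.single (col s(v, x)) 1

theorem ncard_neighborSet_colourClass (p : α → ι) (col : Sym2 α → κ) (c : κ) (v : α) :
    (((colourClass p col c).neighborSet v).ncard : ℤ) = colourDegrees p col v c := by
  have : (colourClass p col c).neighborSet v =
      ↑({x | p v ≠ p x ∧ col s(v, x) = c} : Finset α) := by
    ext
    simp
  rw [this, Set.ncard_coe_finset, colourDegrees, Finset.sum_apply]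
  simp [Pi.single_apply, Finset.sum_boole, filter_filter, eq_comm]

variable {p : α → ι} {col : Sym2 α → κ} {U W : α}

section Potential

variable [Fintype κ]

def potential (p : α → ι) (col : Sym2 α → κ) : ℤ :=
  ∑ v, ∑ c, colourDegrees p col v c ^ 2

theorem potential_sub_potential {col' : Sym2 α → κ} (hUW : U ≠ W) {a b : κ} (hab : a ≠ b)
    (hU : colourDegrees p col' U = colourDegrees p col U + (Pi.single b 1 - Pi.single a 1))
    (hW : colourDegrees p col' W = colourDegrees p col W + (Pi.single a 1 - Pi.single b 1))
    (hother : ∀ v, v ≠ U → v ≠ W → colourDegrees p col' v = colourDegrees p col v) :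
    potential p col' - potential p col = 2 * (colourDegrees p col U b -
      colourDegrees p col W b - (colourDegrees p col U a - colourDegrees p col W a) + 2) := by
  rw [potential, potential, ← sum_sub_distrib,
    Fintype.sum_eq_add U W hUW fun v hv => by rw [hother v hv.1 hv.2, sub_self], hU, hW,
    sum_sq_add_single_sub_single _ hab, sum_sq_add_single_sub_single _ hab.symm]
  ring

end Potential

variable [DecidableEq α] {X : Finset α}

theorem colourDegrees_recolour_left (hU : U ∉ X) (hW : W ∉ X) (hX : ∀ x ∈ X, p U ≠ p x) :
    colourDegrees p (recolour col U W X) U = colourDegrees p col U +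
      ∑ x ∈ X, (Pi.single (col s(W, x)) 1 - Pi.single (col s(U, x)) 1 : κ → ℤ) := by
  have hXN : X ⊆ ({x | p U ≠ p x} : Finset α) := fun x hx => by simpa using hX x hx
  have hout : ∀ x ∈ ({x | p U ≠ p x} : Finset α) \ X,
      (Pi.single (recolour col U W X s(U, x)) 1 : κ → ℤ) = Pi.single (col s(U, x)) 1 := by
    intro x hx
    rw [recolour_mk, swapPair, if_neg (by simp [hU, (mem_sdiff.1 hx).2])]
  have hin : ∀ x ∈ X,
      (Pi.single (recolour col U W X s(U, x)) 1 : κ → ℤ) = Pi.single (col s(W, x)) 1 := by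
    intro x hx
    rw [recolour_mk, swapPair, if_pos (.inr hx)]
    simp [swap_apply_of_mem hU hW hx]
  rw [colourDegrees, colourDegrees, ← sum_sdiff hXN, ← sum_sdiff hXN, sum_congr rfl hout,
    sum_congr rfl hin, sum_sub_distrib]
  abel

theorem colourDegrees_recolour_right (hU : U ∉ X) (hW : W ∉ X) (hX : ∀ x ∈ X, p W ≠ p x) :
    colourDegrees p (recolour col U W X) W = colourDegrees p col W +
      ∑ x ∈ X, (Pi.single (col s(U, x)) 1 - Pi.single (col s(W, x)) 1 : κ → ℤ) := by
  rw [recolour_comm, colourDegrees_recolour_left hW hU hX]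

theorem colourDegrees_recolour_of_ne (hUW : p U = p W) (hU : U ∉ X) (hW : W ∉ X) {v : α}
    (hvU : v ≠ U) (hvW : v ≠ W) :
    colourDegrees p (recolour col U W X) v = colourDegrees p col v := by
  have hv : Equiv.swap U W v = v := Equiv.swap_apply_of_ne_of_ne hvU hvW
  by_cases hvX : v ∈ X
  · refine sum_equiv (Equiv.swap U W) (by simp [apply_swap_eq hUW]) fun x _ => ?_
    rw [recolour_mk, swapPair, if_pos (.inl hvX)]
    simp [hv]
  · refine sum_congr rfl fun x _ => ?_
    rw [recolour_mk, swapPair]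
    split_ifs with h
    · simp [hv, swap_apply_of_mem hU hW (h.resolve_left hvX)]
    · rfl

variable [Fintype κ]

theorem exists_potential_lt (hUW : p U = p W) {c₀ : κ}
    (h : colourDegrees p col W c₀ + 2 ≤ colourDegrees p col U c₀) :
    ∃ col' : Sym2 α → κ, (∀ c j k, crossCount p (colourClass p col' c) j k =
      crossCount p (colourClass p col c) j k) ∧ potential p col' < potential p col := by
  set e : α → κ × κ := fun x => (col s(U, x), col s(W, x))
  have hdU : colourDegrees p col U = ∑ x ∈ {x | p U ≠ p x}, Pi.single (e x).1 1 := rfl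
  have hdW : colourDegrees p col W = ∑ x ∈ {x | p U ≠ p x}, Pi.single (e x).2 1 := by
    rw [colourDegrees, hUW]
  obtain ⟨c₁, hc₁, X, hXN, hX⟩ :=
    exists_isEdgeTrail_of_lt {x | p U ≠ p x} e (a := c₀) (by rw [← hdU, ← hdW]; omega)
  rw [← hdU, ← hdW] at hc₁
  have hXU : ∀ x ∈ X, p U ≠ p x := fun x hx => (mem_filter.1 (hXN hx)).2
  have hU : U ∉ X := fun hU => hXU U hU rfl
  have hW : W ∉ X := fun hW => hXU W hW hUW
  have hUW' : U ≠ W := by rintro rfl; omega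
  have hc : c₀ ≠ c₁ := by rintro rfl; omega
  have hflow := hX.sum_single_sub_single
  have hU' : colourDegrees p (recolour col U W X) U =
      colourDegrees p col U + (Pi.single c₁ 1 - Pi.single c₀ 1) := by
    rw [colourDegrees_recolour_left hU hW hXU, ← hflow]
  have hW' : colourDegrees p (recolour col U W X) W =
      colourDegrees p col W + (Pi.single c₀ 1 - Pi.single c₁ 1) := by
    rw [colourDegrees_recolour_right hU hW (hUW ▸ hXU), ← neg_sub, ← hflow, ← sum_neg_distrib]
    simp only [neg_sub, e]
  have hΔ := potential_sub_potential hUW' hc hU' hW' fun v =>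
    colourDegrees_recolour_of_ne hUW hU hW
  exact ⟨recolour col U W X, crossCount_colourClass_recolour hUW hU hW, by linarith⟩

theorem exists_colouring_almostRegular (p : α → ι) (col₀ : Sym2 α → κ) :
    ∃ col : Sym2 α → κ, (∀ c j k, crossCount p (colourClass p col c) j k =
      crossCount p (colourClass p col₀ c) j k) ∧
      ∀ v w c, p v = p w → colourDegrees p col v c ≤ colourDegrees p col w c + 1 := by
  obtain ⟨col, hcol, hmin⟩ := Set.exists_min_image
    {col | ∀ c j k, crossCount p (colourClass p col c) j k =
      crossCount p (colourClass p col₀ c) j k} (potential p) (Set.toFinite _)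
    ⟨col₀, fun _ _ _ => rfl⟩
  refine ⟨col, hcol, fun v w c hvw => ?_⟩
  by_contra! hlt
  obtain ⟨col', hcount, hlt'⟩ := exists_potential_lt (col := col) hvw (c₀ := c) (by omega)
  exact (hmin col' fun c j k => (hcount c j k).trans (hcol c j k)).not_gt hlt'

end Degrees

end MultipartiteColouring

open MultipartiteColouring

theorem equitabilise_factorisation_of_completeMultipartite_general
    {ι : Type*} [Fintype ι] (V : ι → Type*)
    [∀ i, Fintype (V i)]
    (t : ℕ) (G : Fin t → SimpleGraph (Σ i, V i))
    (hle : ∀ i, G i ≤ completeMultipartiteGraph V)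
    (hpart : ∀ e ∈ (completeMultipartiteGraph V).edgeSet, ∃! i, e ∈ (G i).edgeSet) :
    ∃ F : Fin t → SimpleGraph (Σ i, V i),
      (∀ i, F i ≤ completeMultipartiteGraph V) ∧
      (∀ e ∈ (completeMultipartiteGraph V).edgeSet, ∃! i, e ∈ (F i).edgeSet) ∧
      -- (1) for distinct parts `A_j, A_k`, `F i` and `G i` have the same number of
      -- edges with one endpoint in `A_j` and the other in `A_k`
      (∀ i, ∀ j k : ι, j ≠ k →
        {p : (Σ i, V i) × (Σ i, V i) | (F i).Adj p.1 p.2 ∧ p.1.1 = j ∧ p.2.1 = k}.ncard =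
        {p : (Σ i, V i) × (Σ i, V i) | (G i).Adj p.1 p.2 ∧ p.1.1 = j ∧ p.2.1 = k}.ncard) ∧
      -- (2) each `F i` is almost regular on each part `A_j`
      (∀ i (j : ι) (u w : V j),
        |(((F i).neighborSet ⟨j, u⟩).ncard : ℤ) - (((F i).neighborSet ⟨j, w⟩).ncard : ℤ)| ≤ 1) := by
  classical
  rcases isEmpty_or_nonempty (Fin t) with ht | ht
  · exact ⟨G, hle, hpart, isEmptyElim, isEmptyElim⟩
  obtain ⟨col₀, hcol₀⟩ := exists_colourClass_eq Sigma.fst G hle hpart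
  obtain ⟨col, hcount, hreg⟩ := exists_colouring_almostRegular Sigma.fst col₀
  refine ⟨colourClass Sigma.fst col, colourClass_le _ col,
    fun e he => existsUnique_mem_edgeSet_colourClass _ col he, fun i j k _ => ?_,
    fun i j u w => ?_⟩
  · rw [← hcol₀ i]
    exact hcount i j k
  · rw [ncard_neighborSet_colourClass, ncard_neighborSet_colourClass, abs_sub_le_iff]
    exact ⟨sub_le_iff_le_add'.2 (hreg _ _ i rfl), sub_le_iff_le_add'.2 (hreg _ _ i rfl)⟩

theorem equitabilise_factorisation_of_completeMultipartite
    {ι : Type*} [Fintype ι] [DecidableEq ι] (V : ι → Type*)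
    [∀ i, Fintype (V i)] [∀ i, DecidableEq (V i)] [∀ i, Nonempty (V i)]
    (t : ℕ) (G : Fin t → SimpleGraph (Σ i, V i))
    (hle : ∀ i, G i ≤ completeMultipartiteGraph V)
    (hpart : ∀ e ∈ (completeMultipartiteGraph V).edgeSet, ∃! i, e ∈ (G i).edgeSet) :
    ∃ F : Fin t → SimpleGraph (Σ i, V i),
      (∀ i, F i ≤ completeMultipartiteGraph V) ∧
      (∀ e ∈ (completeMultipartiteGraph V).edgeSet, ∃! i, e ∈ (F i).edgeSet) ∧
      -- (1) for distinct parts `A_j, A_k`, `F i` and `G i` have the same number of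
      -- edges with one endpoint in `A_j` and the other in `A_k`
      (∀ i, ∀ j k : ι, j ≠ k →
        {p : (Σ i, V i) × (Σ i, V i) | (F i).Adj p.1 p.2 ∧ p.1.1 = j ∧ p.2.1 = k}.ncard =
        {p : (Σ i, V i) × (Σ i, V i) | (G i).Adj p.1 p.2 ∧ p.1.1 = j ∧ p.2.1 = k}.ncard) ∧
      -- (2) each `F i` is almost regular on each part `A_j`
      (∀ i (j : ι) (u w : V j),
        |(((F i).neighborSet ⟨j, u⟩).ncard : ℤ) - (((F i).neighborSet ⟨j, w⟩).ncard : ℤ)| ≤ 1) :=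
  equitabilise_factorisation_of_completeMultipartite_general V t G hle hpart
end

section
/- Let G be a finite simple graph, let γ be an edge colouring of G with a finite set of colours, and let S be a set of vertices of G such that every permutation of the vertices of G that fixes all vertices outside S is an automorphism of G. Then there exists an edge colouring γ' of G with the same colour set such that: (a) for each colour c, the number of edges of colour c is the same under γ and γ'; (b) for each vertex v ∉ S and each colour c, the number of edges of colour c incident with v is the same under γ and γ'; (c) every edge with both endpoints outside S has the same colour under γ and γ'; and (d) for each colour c, the colour class of c under γ' is almost regular on S. -/
/-!
Among all recolourings satisfying (a)–(c), take one minimising `∑ v, ∑ c, deg_c(v)²`. Suppose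
`deg_c₀(x) ≥ deg_c₀(y) + 2` for some `x y ∈ S`. The transposition of `x` and `y` is an automorphism,
so it pairs each edge `e` at `x` but not at `y` with an edge `σ e` at `y` but not at `x`; read `e`
as an arc from the colour of `e` to the colour of `σ e`. At `c₀` more arcs leave than enter, so a
trail of such arcs leads from `c₀` to a colour `d` that more arcs enter than leave, i.e.
`deg_d(x) < deg_d(y)`. Exchanging the colours of `e` and `σ e` along the trail moves one `c₀`-edge
from `x` to `y` and one `d`-edge from `y` to `x` and changes nothing else that (a)–(c) see, but it
strictly lowers the potential.
-/

open SimpleGraph Finset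

lemma card_filter_comp_perm {α : Type*} [Fintype α] (φ : Equiv.Perm α) (p : α → Prop)
    [DecidablePred p] : #{a | p (φ a)} = #{a | p a} :=
  card_equiv φ (by simp)

lemma card_filter_eq_add_card_filter_sdiff {α : Type*} [DecidableEq α] {T Z : Finset α}
    (hT : T ⊆ Z) (p : α → Prop) [DecidablePred p] :
    #{a ∈ Z | p a} = #{a ∈ T | p a} + #{a ∈ Z \ T | p a} := by
  rw [← card_union_of_disjoint (disjoint_filter_filter disjoint_sdiff), ← filter_union,
    union_sdiff_of_subset hT]

lemma sum_lt_sum_of_eq_off_pair {ι : Type*} [Fintype ι] [DecidableEq ι] {f g : ι → ℤ} {x y : ι}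
    (hxy : x ≠ y) (h : ∀ v, v ≠ x → v ≠ y → f v = g v) (hlt : f x + f y < g x + g y) :
    ∑ v, f v < ∑ v, g v := by
  rw [← sub_neg, ← sum_sub_distrib,
    Fintype.sum_eq_add x y hxy fun v hv => sub_eq_zero.2 (h v hv.1 hv.2)]
  linarith

lemma sum_sq_sub_add_sq_add_lt {κ : Type*} [Fintype κ] [DecidableEq κ] (X Y : κ → ℤ) {c₀ d : κ}
    (h₀ : Y c₀ + 2 ≤ X c₀) (hd : X d < Y d) :
    ∑ c, ((X c - ((if c₀ = c then 1 else 0) - (if d = c then 1 else 0))) ^ 2 +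
        (Y c + ((if c₀ = c then 1 else 0) - (if d = c then 1 else 0))) ^ 2) <
      ∑ c, (X c ^ 2 + Y c ^ 2) := by
  have hne : c₀ ≠ d := by rintro rfl; omega
  refine sum_lt_sum (fun c _ => ?_) ⟨c₀, mem_univ _, ?_⟩
  · split_ifs with h₁ h₂ h₂
    · exact absurd (h₁.trans h₂.symm) hne
    · subst h₁; nlinarith
    · subst h₂; nlinarith
    · simp
  · rw [if_pos rfl, if_neg hne.symm]; nlinarith

section NetFlow

variable {ι κ : Type*} [DecidableEq κ]

/-- Out-degree minus in-degree of `c` in the multigraph on `κ` with an arc from `a z` to `b z` for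
each `z ∈ T`. -/
def netFlow (a b : ι → κ) (T : Finset ι) (c : κ) : ℤ :=
  #{z ∈ T | a z = c} - #{z ∈ T | b z = c}

lemma netFlow_flip (a b : ι → κ) (T : Finset ι) (c : κ) :
    netFlow b a T c = -netFlow a b T c := by
  simp only [netFlow]
  ring

variable [DecidableEq ι]

lemma netFlow_insert (a b : ι → κ) {T : Finset ι} {z : ι} (hz : z ∉ T) (c : κ) :
    netFlow a b (insert z T) c =
      netFlow a b T c + (if a z = c then 1 else 0) - (if b z = c then 1 else 0) := by
  simp only [netFlow, card_filter, sum_insert hz]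
  push_cast
  ring

theorem exists_subset_netFlow_eq_of_pos (a b : ι → κ) (Z : Finset ι) (c₀ : κ)
    (h : 0 < netFlow a b Z c₀) :
    ∃ T ⊆ Z, ∃ d, netFlow a b Z d < 0 ∧
      ∀ c, netFlow a b T c = (if c₀ = c then 1 else 0) - (if d = c then 1 else 0) := by
  induction Z using Finset.strongInduction generalizing c₀ with
  | H Z ih =>
  obtain ⟨z, hz, rfl⟩ : ∃ z ∈ Z, a z = c₀ := by
    by_contra! hno
    have : #{z ∈ Z | a z = c₀} = 0 := card_eq_zero.2 (filter_eq_empty_iff.2 hno)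
    simp only [netFlow] at h
    omega
  have hZ : ∀ c, netFlow a b Z c =
      netFlow a b (Z.erase z) c + (if a z = c then 1 else 0) - (if b z = c then 1 else 0) := by
    intro c
    rw [← netFlow_insert a b (notMem_erase z Z), insert_erase hz]
  -- Follow the arc `z` out of `c₀`: stop if its head `b z` has negative net flow, and otherwise
  -- continue from `b z` in `Z.erase z`, where `b z` now has positive net flow.
  by_cases hb : netFlow a b Z (b z) < 0
  · refine ⟨{z}, singleton_subset_iff.2 hz, b z, hb, fun c => ?_⟩
    rw [← insert_empty, netFlow_insert a b (notMem_empty z)]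
    simp [netFlow]
  have hpos : 0 < netFlow a b (Z.erase z) (b z) := by
    have := hZ (b z)
    rw [if_pos rfl] at this
    split_ifs at this with hab
    · rw [← hab] at this ⊢; omega
    · omega
  obtain ⟨T, hT, d, hd, hflow⟩ := ih (Z.erase z) (erase_ssubset hz) (b z) hpos
  have hzT : z ∉ T := fun h => notMem_erase z Z (hT h)
  refine ⟨insert z T, insert_subset hz (hT.trans (erase_subset z Z)), d, ?_, fun c => ?_⟩
  · have hd' := hZ d
    by_cases had : a z = d
    · subst had
      split_ifs at hd' <;> omega
    · rw [if_neg had] at hd'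
      split_ifs at hd' <;> omega
  · rw [netFlow_insert a b hzT, hflow]
    ring

end NetFlow

section PartialSwap

variable {α : Type*} [DecidableEq α]

/-- `σ` on `T ∪ σ T`, the identity elsewhere. -/
def partialSwap (σ : Equiv.Perm α) (hσ : Function.Involutive σ) (T : Finset α) : Equiv.Perm α :=
  Equiv.Perm.ofSubtype (σ.subtypePerm (p := fun a => a ∈ T ∨ σ a ∈ T) fun a => by
    rw [hσ a, or_comm])

variable {σ : Equiv.Perm α} (hσ : Function.Involutive σ) {T : Finset α}

lemma partialSwap_apply_of_mem {a : α} (ha : a ∈ T ∨ σ a ∈ T) : partialSwap σ hσ T a = σ a :=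
  Equiv.Perm.ofSubtype_apply_of_mem (p := fun a => a ∈ T ∨ σ a ∈ T) _ ha

lemma partialSwap_apply_of_notMem {a : α} (ha : ¬(a ∈ T ∨ σ a ∈ T)) :
    partialSwap σ hσ T a = a :=
  Equiv.Perm.ofSubtype_apply_of_not_mem (p := fun a => a ∈ T ∨ σ a ∈ T) _ ha

lemma partialSwap_apply_comm (a : α) : partialSwap σ hσ T (σ a) = σ (partialSwap σ hσ T a) := by
  by_cases ha : a ∈ T ∨ σ a ∈ T
  · rw [partialSwap_apply_of_mem hσ ha, partialSwap_apply_of_mem hσ (by rwa [hσ a, or_comm])]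
  · rw [partialSwap_apply_of_notMem hσ ha,
      partialSwap_apply_of_notMem hσ (by rwa [hσ a, or_comm])]

end PartialSwap

lemma SimpleGraph.Iso.mem_mapEdgeSet_iff {V W : Type*} {G : SimpleGraph V} {G' : SimpleGraph W}
    (σ : G ≃g G') {w : W} {e : G.edgeSet} :
    w ∈ (σ.mapEdgeSet e : Sym2 W) ↔ σ.symm w ∈ (e : Sym2 V) := by
  simp only [Iso.mapEdgeSet_apply, Hom.mapEdgeSet_coe, Sym2.mem_map]
  constructor
  · rintro ⟨v, hv, rfl⟩
    simpa using hv
  · exact fun h => ⟨_, h, by simp⟩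

section SwapEdge

variable {V : Type*} [DecidableEq V] {G : SimpleGraph V} {x y : V}
  (hswap : ∀ u v, G.Adj (Equiv.swap x y u) (Equiv.swap x y v) ↔ G.Adj u v)

def swapEdge : Equiv.Perm G.edgeSet :=
  Iso.mapEdgeSet (⟨Equiv.swap x y, hswap _ _⟩ : G ≃g G)

lemma mem_swapEdge_iff {v : V} {e : G.edgeSet} :
    v ∈ (swapEdge hswap e : Sym2 V) ↔ Equiv.swap x y v ∈ (e : Sym2 V) :=
  Iso.mem_mapEdgeSet_iff _

lemma swapEdge_involutive : Function.Involutive (swapEdge hswap) := fun e =>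
  Subtype.ext (by simp [swapEdge, Sym2.map_map])

lemma mem_partialSwap_swapEdge_iff (T : Finset G.edgeSet) {v : V} (hvx : v ≠ x) (hvy : v ≠ y)
    (e : G.edgeSet) :
    v ∈ (partialSwap (swapEdge hswap) (swapEdge_involutive hswap) T e : Sym2 V) ↔
      v ∈ (e : Sym2 V) := by
  by_cases he : e ∈ T ∨ swapEdge hswap e ∈ T
  · rw [partialSwap_apply_of_mem _ he, mem_swapEdge_iff, Equiv.swap_apply_of_ne_of_ne hvx hvy]
  · rw [partialSwap_apply_of_notMem _ he]

end SwapEdge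

section Colouring

variable {V : Type*} [Fintype V] [DecidableEq V] {G : SimpleGraph V} [DecidableRel G.Adj]
  {C : Type*} [DecidableEq C]

def colourDegree (γ : G.edgeSet → C) (c : C) (v : V) : ℕ :=
  #{e | γ e = c ∧ v ∈ (e : Sym2 V)}

lemma colourDegree_comp_perm (γ : G.edgeSet → C) {φ : Equiv.Perm G.edgeSet} {v : V}
    (hv : ∀ e, v ∈ (φ e : Sym2 V) ↔ v ∈ (e : Sym2 V)) (c : C) :
    colourDegree (γ ∘ φ) c v = colourDegree γ c v := by
  refine Eq.trans ?_ (card_filter_comp_perm φ _)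
  simp only [hv]
  rfl

lemma colourDegree_comp_mapEdgeSet (γ : G.edgeSet → C) (σ : G ≃g G) (c : C) (v : V) :
    colourDegree (γ ∘ σ.mapEdgeSet) c v = colourDegree γ c (σ v) := by
  refine Eq.trans ?_ (card_filter_comp_perm σ.mapEdgeSet _)
  simp only [Iso.mem_mapEdgeSet_iff, RelIso.symm_apply_apply]
  rfl

def edgesAtAvoiding (G : SimpleGraph V) [DecidableRel G.Adj] (x y : V) : Finset G.edgeSet :=
  {e | x ∈ (e : Sym2 V) ∧ y ∉ (e : Sym2 V)}

lemma colourDegree_eq_card_add (f : G.edgeSet → C) (c : C) (x y : V) :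
    colourDegree f c x = #{e ∈ edgesAtAvoiding G x y | f e = c} +
      #{e | f e = c ∧ x ∈ (e : Sym2 V) ∧ y ∈ (e : Sym2 V)} := by
  rw [colourDegree, ← card_filter_add_card_filter_not (fun e : G.edgeSet => y ∉ (e : Sym2 V))]
  simp only [edgesAtAvoiding, filter_filter, not_not]
  congr 2 <;> ext e <;> simp only [mem_filter, mem_univ, true_and] <;> tauto

variable {x y : V} (hswap : ∀ u v, G.Adj (Equiv.swap x y u) (Equiv.swap x y v) ↔ G.Adj u v)

lemma colourDegree_comp_swapEdge (f : G.edgeSet → C) (c : C) :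
    colourDegree (f ∘ swapEdge hswap) c x = colourDegree f c y :=
  (colourDegree_comp_mapEdgeSet f _ c x).trans (by simp)

lemma swapEdge_mem_edgesAtAvoiding_iff {e : G.edgeSet} :
    swapEdge hswap e ∈ edgesAtAvoiding G x y ↔ y ∈ (e : Sym2 V) ∧ x ∉ (e : Sym2 V) := by
  simp [edgesAtAvoiding, mem_swapEdge_iff]

lemma partialSwap_swapEdge_apply_of_iff {T : Finset G.edgeSet} (hT : T ⊆ edgesAtAvoiding G x y)
    {e : G.edgeSet} (he : x ∈ (e : Sym2 V) ↔ y ∈ (e : Sym2 V)) :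
    partialSwap (swapEdge hswap) (swapEdge_involutive hswap) T e = e := by
  refine partialSwap_apply_of_notMem _ fun h => ?_
  rcases h with h | h
  · have := hT h
    simp only [edgesAtAvoiding, mem_filter, mem_univ, true_and] at this
    tauto
  · have := (swapEdge_mem_edgesAtAvoiding_iff hswap).1 (hT h)
    tauto

lemma netFlow_edgesAtAvoiding (f : G.edgeSet → C) (c : C) :
    netFlow f (f ∘ swapEdge hswap) (edgesAtAvoiding G x y) c =
      colourDegree f c x - colourDegree f c y := by
  have hboth : #{e | (f ∘ swapEdge hswap) e = c ∧ x ∈ (e : Sym2 V) ∧ y ∈ (e : Sym2 V)} =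
      #{e | f e = c ∧ x ∈ (e : Sym2 V) ∧ y ∈ (e : Sym2 V)} := by
    refine Eq.trans ?_ (card_filter_comp_perm (swapEdge hswap) _)
    simp only [Function.comp_apply, mem_swapEdge_iff, Equiv.swap_apply_left,
      Equiv.swap_apply_right, and_comm (a := y ∈ _)]
  rw [← colourDegree_comp_swapEdge hswap, colourDegree_eq_card_add f c x y,
    colourDegree_eq_card_add _ c x y, hboth, netFlow]
  push_cast
  ring

lemma colourDegree_comp_partialSwap_left (f : G.edgeSet → C) {T : Finset G.edgeSet}
    (hT : T ⊆ edgesAtAvoiding G x y) (c : C) :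
    (colourDegree (f ∘ partialSwap (swapEdge hswap) (swapEdge_involutive hswap) T) c x : ℤ) =
      colourDegree f c x - netFlow f (f ∘ swapEdge hswap) T c := by
  set φ := partialSwap (swapEdge hswap) (swapEdge_involutive hswap) T
  have hboth : #{e | (f ∘ φ) e = c ∧ x ∈ (e : Sym2 V) ∧ y ∈ (e : Sym2 V)} =
      #{e | f e = c ∧ x ∈ (e : Sym2 V) ∧ y ∈ (e : Sym2 V)} :=
    congrArg card <| filter_congr fun e _ => and_congr_left fun ⟨hx, hy⟩ => by
      rw [Function.comp_apply, partialSwap_swapEdge_apply_of_iff hswap hT (iff_of_true hx hy)]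
  have hin : #{e ∈ T | (f ∘ φ) e = c} = #{e ∈ T | (f ∘ swapEdge hswap) e = c} :=
    congrArg card <| filter_congr fun e he => by
      rw [Function.comp_apply, partialSwap_apply_of_mem _ (Or.inl he), Function.comp_apply]
  have hout : #{e ∈ edgesAtAvoiding G x y \ T | (f ∘ φ) e = c} =
      #{e ∈ edgesAtAvoiding G x y \ T | f e = c} :=
    congrArg card <| filter_congr fun e he => by
      obtain ⟨heZ, heT⟩ := mem_sdiff.1 he
      have hσe : swapEdge hswap e ∉ T := fun h => by
        have := (swapEdge_mem_edgesAtAvoiding_iff hswap).1 (hT h)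
        simp only [edgesAtAvoiding, mem_filter, mem_univ, true_and] at heZ
        tauto
      rw [Function.comp_apply, partialSwap_apply_of_notMem _ (by tauto)]
  rw [colourDegree_eq_card_add _ c x y, colourDegree_eq_card_add f c x y, hboth,
    card_filter_eq_add_card_filter_sdiff hT, card_filter_eq_add_card_filter_sdiff hT, hin, hout,
    netFlow]
  push_cast
  ring

lemma colourDegree_comp_partialSwap_right (f : G.edgeSet → C) {T : Finset G.edgeSet}
    (hT : T ⊆ edgesAtAvoiding G x y) (c : C) :
    (colourDegree (f ∘ partialSwap (swapEdge hswap) (swapEdge_involutive hswap) T) c y : ℤ) =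
      colourDegree f c y + netFlow f (f ∘ swapEdge hswap) T c := by
  set φ := partialSwap (swapEdge hswap) (swapEdge_involutive hswap) T
  have hcomm : (f ∘ φ) ∘ swapEdge hswap = (f ∘ swapEdge hswap) ∘ φ :=
    funext fun e => congrArg f (partialSwap_apply_comm _ e)
  have hff : (f ∘ swapEdge hswap) ∘ swapEdge hswap = f :=
    funext fun e => congrArg f (swapEdge_involutive hswap e)
  rw [← colourDegree_comp_swapEdge hswap, ← colourDegree_comp_swapEdge hswap f, hcomm,
    colourDegree_comp_partialSwap_left hswap _ hT, hff, netFlow_flip]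
  ring

end Colouring

section Potential

variable {V : Type*} [Fintype V] [DecidableEq V] {G : SimpleGraph V} [DecidableRel G.Adj]
  {C : Type*} [Fintype C] [DecidableEq C]

def sqDegreeSum (γ : G.edgeSet → C) : ℤ :=
  ∑ v, ∑ c, (colourDegree γ c v : ℤ) ^ 2

theorem exists_perm_sqDegreeSum_lt (γ : G.edgeSet → C) {x y : V}
    (hswap : ∀ u v, G.Adj (Equiv.swap x y u) (Equiv.swap x y v) ↔ G.Adj u v) {c₀ : C}
    (hgap : colourDegree γ c₀ y + 2 ≤ colourDegree γ c₀ x) :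
    ∃ φ : Equiv.Perm G.edgeSet,
      (∀ e : G.edgeSet, (x ∈ (e : Sym2 V) ↔ y ∈ (e : Sym2 V)) → φ e = e) ∧
      (∀ v, v ≠ x → v ≠ y → ∀ e : G.edgeSet, v ∈ (φ e : Sym2 V) ↔ v ∈ (e : Sym2 V)) ∧
      sqDegreeSum (γ ∘ φ) < sqDegreeSum γ := by
  have hxy : x ≠ y := by rintro rfl; omega
  obtain ⟨T, hT, d, hd, hflow⟩ := exists_subset_netFlow_eq_of_pos γ (γ ∘ swapEdge hswap)
    (edgesAtAvoiding G x y) c₀ (by rw [netFlow_edgesAtAvoiding]; omega)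
  rw [netFlow_edgesAtAvoiding, sub_neg] at hd
  refine ⟨partialSwap (swapEdge hswap) (swapEdge_involutive hswap) T,
    fun e he => partialSwap_swapEdge_apply_of_iff hswap hT he,
    fun v hvx hvy => mem_partialSwap_swapEdge_iff hswap T hvx hvy, ?_⟩
  refine sum_lt_sum_of_eq_off_pair hxy (fun v hvx hvy => ?_) ?_
  · simp only [colourDegree_comp_perm γ (mem_partialSwap_swapEdge_iff hswap T hvx hvy)]
  · simp only [colourDegree_comp_partialSwap_left hswap γ hT,
      colourDegree_comp_partialSwap_right hswap γ hT, hflow, ← sum_add_distrib]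
    exact sum_sq_sub_add_sq_add_lt _ _ (by exact_mod_cast hgap) hd

end Potential

theorem almost_regular_edge_colouring_general
    {V : Type*} [Fintype V] [DecidableEq V] (G : SimpleGraph V) [DecidableRel G.Adj]
    {C : Type*} [Fintype C] [DecidableEq C]
    (γ : G.edgeSet → C) (S : Set V)
    (hS : ∀ σ : Equiv.Perm V, (∀ v ∉ S, σ v = v) →
      ∀ u v, G.Adj u v ↔ G.Adj (σ u) (σ v)) :
    ∃ γ' : G.edgeSet → C,
      -- (a) each colour class has the same number of edges under γ and γ'
      (∀ c : C, (Finset.univ.filter fun e : G.edgeSet => γ' e = c).card =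
          (Finset.univ.filter fun e : G.edgeSet => γ e = c).card) ∧
      -- (b) for v ∉ S, the number of edges of each colour incident with v is unchanged
      (∀ v ∉ S, ∀ c : C,
        (Finset.univ.filter fun e : G.edgeSet => γ' e = c ∧ v ∈ (e : Sym2 V)).card =
          (Finset.univ.filter fun e : G.edgeSet => γ e = c ∧ v ∈ (e : Sym2 V)).card) ∧
      -- (c) edges with both endpoints outside S keep their colour
      (∀ e : G.edgeSet, (∀ v ∈ (e : Sym2 V), v ∉ S) → γ' e = γ e) ∧
      -- (d) each colour class of γ' is almost regular on S
      (∀ c : C, ∀ x ∈ S, ∀ y ∈ S,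
        |(((Finset.univ.filter fun e : G.edgeSet => γ' e = c ∧ x ∈ (e : Sym2 V)).card : ℤ)) -
          ((Finset.univ.filter fun e : G.edgeSet => γ' e = c ∧ y ∈ (e : Sym2 V)).card : ℤ)| ≤ 1) := by
  obtain ⟨γm, ⟨hA, hB, hC⟩, hmin⟩ := Set.exists_min_image
    {γ' : G.edgeSet → C | (∀ c, #{e | γ' e = c} = #{e | γ e = c}) ∧
      (∀ v ∉ S, ∀ c, colourDegree γ' c v = colourDegree γ c v) ∧
      (∀ e : G.edgeSet, (∀ v ∈ (e : Sym2 V), v ∉ S) → γ' e = γ e)}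
    sqDegreeSum (Set.toFinite _) ⟨γ, fun _ => rfl, fun _ _ _ => rfl, fun _ _ => rfl⟩
  refine ⟨γm, hA, hB, hC, fun c x hx y hy => ?_⟩
  change |(colourDegree γm c x : ℤ) - colourDegree γm c y| ≤ 1
  by_contra hgap
  obtain ⟨x, hx, y, hy, hgap⟩ :
      ∃ x ∈ S, ∃ y ∈ S, colourDegree γm c y + 2 ≤ colourDegree γm c x := by
    rcases lt_abs.1 (not_le.1 hgap) with h | h
    exacts [⟨x, hx, y, hy, by omega⟩, ⟨y, hy, x, hx, by omega⟩]
  have hxv : ∀ v ∉ S, v ≠ x := fun v hv h => hv (h ▸ hx)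
  have hyv : ∀ v ∉ S, v ≠ y := fun v hv h => hv (h ▸ hy)
  obtain ⟨φ, hφ, hφinc, hlt⟩ := exists_perm_sqDegreeSum_lt γm
    (fun u v => (hS _ (fun v hv => Equiv.swap_apply_of_ne_of_ne (hxv v hv) (hyv v hv)) u v).symm)
    hgap
  refine (hmin (γm ∘ φ) ⟨fun c => ?_, fun v hv c => ?_, fun e he => ?_⟩).not_gt hlt
  · exact (card_filter_comp_perm φ (fun e => γm e = c)).trans (hA c)
  · exact (colourDegree_comp_perm γm (hφinc v (hxv v hv) (hyv v hv)) c).trans (hB v hv c)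
  · rw [Function.comp_apply, hφ e (iff_of_false (fun h => he x h hx) (fun h => he y h hy))]
    exact hC e he

theorem almost_regular_edge_colouring
    {V : Type*} [Fintype V] [DecidableEq V] (G : SimpleGraph V) [DecidableRel G.Adj]
    {C : Type*} [Fintype C] [DecidableEq C]
    (γ : G.edgeSet → C) (S : Set V) [DecidablePred (· ∈ S)]
    (hS : ∀ σ : Equiv.Perm V, (∀ v ∉ S, σ v = v) →
      ∀ u v, G.Adj u v ↔ G.Adj (σ u) (σ v)) :
    ∃ γ' : G.edgeSet → C,
      -- (a) each colour class has the same number of edges under γ and γ'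
      (∀ c : C, (Finset.univ.filter fun e : G.edgeSet => γ' e = c).card =
          (Finset.univ.filter fun e : G.edgeSet => γ e = c).card) ∧
      -- (b) for v ∉ S, the number of edges of each colour incident with v is unchanged
      (∀ v ∉ S, ∀ c : C,
        (Finset.univ.filter fun e : G.edgeSet => γ' e = c ∧ v ∈ (e : Sym2 V)).card =
          (Finset.univ.filter fun e : G.edgeSet => γ e = c ∧ v ∈ (e : Sym2 V)).card) ∧
      -- (c) edges with both endpoints outside S keep their colour
      (∀ e : G.edgeSet, (∀ v ∈ (e : Sym2 V), v ∉ S) → γ' e = γ e) ∧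
      -- (d) each colour class of γ' is almost regular on S
      (∀ c : C, ∀ x ∈ S, ∀ y ∈ S,
        |(((Finset.univ.filter fun e : G.edgeSet => γ' e = c ∧ x ∈ (e : Sym2 V)).card : ℤ)) -
          ((Finset.univ.filter fun e : G.edgeSet => γ' e = c ∧ y ∈ (e : Sym2 V)).card : ℤ)| ≤ 1) :=
  almost_regular_edge_colouring_general G γ S hS
end
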